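/- arXiv:2208.09251 — 5 statements merged into one kernel-verified Lean document; each statement's English description precedes it below -/
import Mathlib

section
/- Let n ≥ 3 and let C_n be the cycle graph on vertices [n]. The injective linear map φ : (ℚ^n)^* → (ℚ^{n+1})^* defined by φ(x_i) = x_{i+1} − x_i for 1 ≤ i < n and φ(x_n) = x_1 − x_n − x_{n+1} maps the set of hyperplanes of the connected subgraph arrangement 𝒜_{C_n} bijectively onto the set of hyperplanes of the cone c Ŝ_n of the n-th Shi arrangement; that is, H ↦ ker(φ(α_H)) is a bijection from 𝒜_{C_n} onto c Ŝ_n. -/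
open Finset

/-- The linear form `∑_{i ∈ I} x_i` on `ℚ^n`. -/
noncomputable def linForm {n : ℕ} (I : Finset (Fin n)) : (Fin n → ℚ) →ₗ[ℚ] ℚ :=
  ∑ i ∈ I, LinearMap.proj i

/-- `I` is a nonempty subset of vertices inducing a connected subgraph of `G`. -/
def ConnSet {n : ℕ} (G : SimpleGraph (Fin n)) (I : Finset (Fin n)) : Prop :=
  I.Nonempty ∧ (G.induce (↑I : Set (Fin n))).Connected

/-- The connected subgraph arrangement of `G`, as a set of hyperplanes of `ℚ^n`. -/
def csa {n : ℕ} (G : SimpleGraph (Fin n)) : Set (Submodule ℚ (Fin n → ℚ)) :=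
  {H | ∃ I : Finset (Fin n), ConnSet G I ∧ H = LinearMap.ker (linForm I)}

/-- The almost path graph `A_{n,k}` (paper notation, vertices `1,…,n+1` realized as
`Fin (n+1)` with `0,…,n`): a path `1–⋯–n` together with the edge `{k, n+1}`. -/
def almostPath (n k : ℕ) : SimpleGraph (Fin (n + 1)) :=
  SimpleGraph.fromRel (fun a b =>
    (a.val + 1 = b.val ∧ b.val < n) ∨ (a.val = k - 1 ∧ b.val = n))

/-- The path-with-triangle graph `Δ_{n,k}` (paper notation): a path `1–⋯–n` together
with the edges `{k, n+1}` and `{k+1, n+1}`. -/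
def pathTriangle (n k : ℕ) : SimpleGraph (Fin (n + 1)) :=
  SimpleGraph.fromRel (fun a b =>
    (a.val + 1 = b.val ∧ b.val < n) ∨ (a.val = k - 1 ∧ b.val = n) ∨ (a.val = k ∧ b.val = n))

/-- The module of `𝒜_G`-derivations `D(𝒜_G) ⊆ Der_ℚ(ℚ[x_1,…,x_n])`. -/
noncomputable def derModule {n : ℕ} (G : SimpleGraph (Fin n)) :
    Submodule (MvPolynomial (Fin n) ℚ)
      (Derivation ℚ (MvPolynomial (Fin n) ℚ) (MvPolynomial (Fin n) ℚ)) where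
  carrier := {θ | ∀ I : Finset (Fin n), ConnSet G I →
    (∑ i ∈ I, MvPolynomial.X i) ∣ θ (∑ i ∈ I, MvPolynomial.X i)}
  add_mem' := by
    intro a b ha hb I hI
    rw [Derivation.add_apply]
    exact dvd_add (ha I hI) (hb I hI)
  zero_mem' := by
    intro I hI
    simp
  smul_mem' := by
    intro c θ hθ I hI
    rw [Derivation.smul_apply, smul_eq_mul]
    exact (hθ I hI).mul_left c

/-- The coordinate linear form `x_i` on `ℚ^m`. -/
noncomputable def coord {m : ℕ} (i : Fin m) : (Fin m → ℚ) →ₗ[ℚ] ℚ := LinearMap.proj i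

/-- The linear map `T : ℚ^{n+1} → ℚ^n` whose dual map is the embedding
`φ : (ℚ^n)^* → (ℚ^{n+1})^*`, `φ(x_i) = x_{i+1} − x_i` for `1 ≤ i < n` and
`φ(x_n) = x_1 − x_n − x_{n+1}` (all indices written 1-based as in the paper,
0-based in the formalization). -/
noncomputable def shiT (n : ℕ) : (Fin (n + 1) → ℚ) →ₗ[ℚ] (Fin n → ℚ) :=
  LinearMap.pi fun a : Fin n =>
    if a.val + 1 < n then coord a.succ - coord a.castSucc
    else coord 0 - coord a.castSucc - coord (Fin.last n)

/-- The cone over the `n`-th Shi arrangement: the hyperplanes `ker(x_i − x_j)` and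
`ker(x_i − x_j − x_{n+1})` for `1 ≤ i < j ≤ n` together with `ker(x_{n+1})`,
in `ℚ^{n+1}`. -/
def shiCone (n : ℕ) : Set (Submodule ℚ (Fin (n + 1) → ℚ)) :=
  {H | (∃ i j : Fin n, i < j ∧
          H = LinearMap.ker (coord i.castSucc - coord j.castSucc)) ∨
       (∃ i j : Fin n, i < j ∧
          H = LinearMap.ker (coord i.castSucc - coord j.castSucc - coord (Fin.last n))) ∨
       H = LinearMap.ker (coord (Fin.last n))}

/-!
Connected vertex sets of the cycle `C_n` are exactly the cyclic arcs `{a, a + 1, …, a + m - 1}`,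
`1 ≤ m ≤ n`: an arc is the image of a path, and a connected `I ≠ univ` is the arc that starts at a
vertex `a ∈ I` with `a - 1 ∉ I` and ends just before the first vertex after `a` missing from `I`.

Index the coordinates of `ℚ^{n+1}` from `0`, so that `x_n` is the cone variable. With the
potentials `P k = x_{k mod n} - ⌊k / n⌋ x_n` one has `φ(x_k) = P (k + 1) - P k`, so the form of an
arc telescopes to `P (a + m) - P a`, which is `x_{a+m} - x_a`, `x_{a+m-n} - x_a - x_n` or `-x_n`
according as the arc does not wrap around, wraps around, or is the whole cycle: these are exactly
the hyperplanes of the Shi cone. Injectivity holds because `φ` is dual to a surjection.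
-/

theorem SimpleGraph.Preconnected.subset_of_forall_adj_mem {V : Type*} {G : SimpleGraph V}
    {I S : Set V} (hI : (G.induce I).Preconnected) {a : V} (haI : a ∈ I) (haS : a ∈ S)
    (hS : ∀ z ∈ I, z ∈ S → ∀ y ∈ I, G.Adj z y → y ∈ S) : I ⊆ S := by
  intro x hxI
  by_contra hxS
  obtain ⟨p⟩ := hI ⟨a, haI⟩ ⟨x, hxI⟩
  obtain ⟨d, -, hd, hd'⟩ := p.exists_boundary_dart {v | v.1 ∈ S} haS hxS
  exact hd' (hS _ d.fst.2 hd _ d.snd.2 d.adj)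

namespace CycleShi

open SimpleGraph
open scoped Fin.NatCast Fin.CommRing

variable {n : ℕ} [NeZero n]

theorem cycleGraph_adj_add_one (hn : 2 ≤ n) (u : Fin n) : (cycleGraph n).Adj u (u + 1) := by
  rw [cycleGraph_adj', add_sub_cancel_left, Fin.val_one', Nat.mod_eq_of_lt hn]
  exact Or.inr rfl

theorem eq_add_one_or_eq_sub_one_of_cycleGraph_adj {u v : Fin n} (h : (cycleGraph n).Adj u v) :
    v = u + 1 ∨ v = u - 1 := by
  have eq_one (w : Fin n) (hw : w.val = 1) : w = 1 :=
    Fin.ext (by rw [hw, Fin.val_one', Nat.mod_eq_of_lt (hw ▸ w.isLt)])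
  rcases cycleGraph_adj'.1 h with h | h
  · exact Or.inr (by rw [← eq_one _ h, sub_sub_cancel])
  · exact Or.inl (by rw [← eq_one _ h, add_sub_cancel])

def arc (a : Fin n) (m : ℕ) : Finset (Fin n) :=
  (Finset.range m).image fun t : ℕ => a + (t : Fin n)

theorem mem_arc {a x : Fin n} {m : ℕ} : x ∈ arc a m ↔ ∃ t < m, a + (t : Fin n) = x := by
  simp [arc]

theorem add_natCast_mem_arc (a : Fin n) {m t : ℕ} (ht : t < m) : a + (t : Fin n) ∈ arc a m :=
  mem_arc.2 ⟨t, ht, rfl⟩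

theorem self_mem_arc (a : Fin n) {m : ℕ} (hm : 0 < m) : a ∈ arc a m := by
  simpa using add_natCast_mem_arc a hm

theorem arc_eq_univ (a : Fin n) : arc a n = Finset.univ :=
  Finset.eq_univ_of_forall fun x =>
    mem_arc.2 ⟨(x - a).val, (x - a).isLt, by rw [Fin.cast_val_eq_self, add_sub_cancel]⟩

theorem connSet_arc (hn : 2 ≤ n) (a : Fin n) {m : ℕ} (hm : 0 < m) :
    ConnSet (cycleGraph n) (arc a m) := by
  obtain ⟨k, rfl⟩ : ∃ k, m = k + 1 := ⟨m - 1, by omega⟩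
  let f : pathGraph (k + 1) →g (cycleGraph n).induce (arc a (k + 1) : Set (Fin n)) :=
    { toFun := fun t => ⟨a + (t.val : Fin n), add_natCast_mem_arc a t.isLt⟩
      map_rel' := by
        intro s t hst
        change (cycleGraph n).Adj (a + (s.val : Fin n)) (a + (t.val : Fin n))
        rcases pathGraph_adj.1 hst with h | h
        · rw [← h, Nat.cast_succ, ← add_assoc]
          exact cycleGraph_adj_add_one hn _
        · rw [← h, Nat.cast_succ, ← add_assoc]
          exact (cycleGraph_adj_add_one hn _).symm }
  refine ⟨⟨a, self_mem_arc a hm⟩, (pathGraph_connected k).map f ?_⟩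
  rintro ⟨x, hx⟩
  obtain ⟨t, ht, rfl⟩ := mem_arc.1 hx
  exact ⟨⟨t, ht⟩, rfl⟩

theorem mem_arc_of_cycleGraph_adj {a y z : Fin n} {m : ℕ} (hz : z ∈ arc a m)
    (hadj : (cycleGraph n).Adj z y) (hy₁ : y ≠ a - 1) (hy₂ : y ≠ a + (m : Fin n)) :
    y ∈ arc a m := by
  obtain ⟨t, ht, rfl⟩ := mem_arc.1 hz
  rcases eq_add_one_or_eq_sub_one_of_cycleGraph_adj hadj with rfl | rfl
  · have ht' : t + 1 ≠ m := by rintro rfl; exact hy₂ (by push_cast; ring)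
    exact mem_arc.2 ⟨t + 1, by omega, by push_cast; ring⟩
  · have ht' : t ≠ 0 := by rintro rfl; exact hy₁ (by simp)
    exact mem_arc.2 ⟨t - 1, by omega, by rw [Nat.cast_pred (by omega)]; ring⟩

theorem exists_mem_sub_one_notMem {I : Finset (Fin n)} (hne : I.Nonempty)
    (hI : I ≠ Finset.univ) : ∃ a ∈ I, a - 1 ∉ I := by
  by_contra! h
  obtain ⟨c, hc⟩ := hne
  have hsub (k : ℕ) : c - (k : Fin n) ∈ I := by
    induction k with
    | zero => simpa using hc
    | succ k ih => simpa [sub_sub] using h _ ih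
  exact hI (Finset.eq_univ_of_forall fun x => by simpa using hsub (c - x).val)

theorem exists_eq_arc_of_connSet {I : Finset (Fin n)} (hI : ConnSet (cycleGraph n) I) :
    ∃ a : Fin n, ∃ m, 0 < m ∧ m ≤ n ∧ I = arc a m := by
  by_cases hu : I = Finset.univ
  · exact ⟨0, n, Nat.pos_of_neZero n, le_rfl, by rw [hu, arc_eq_univ]⟩
  obtain ⟨a, haI, ha⟩ := exists_mem_sub_one_notMem hI.1 hu
  obtain ⟨b, hb⟩ : ∃ b, b ∉ I := by simpa [Finset.eq_univ_iff_forall] using hu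
  have hexit : ∃ m : ℕ, a + (m : Fin n) ∉ I := ⟨(b - a).val, by simpa using hb⟩
  classical
  set m := Nat.find hexit
  have hm : 0 < m := (Nat.find_pos hexit).2 (by simpa using haI)
  have hsub : arc a m ⊆ I := fun x hx => by
    obtain ⟨t, ht, rfl⟩ := mem_arc.1 hx
    exact not_not.1 (Nat.find_min hexit ht)
  refine ⟨a, m, hm, (Nat.find_min' hexit (by simpa using hb)).trans (b - a).isLt.le,
    subset_antisymm ?_ hsub⟩
  rw [← Finset.coe_subset]
  refine hI.2.preconnected.subset_of_forall_adj_mem haI (self_mem_arc a hm)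
    fun z _ hz y hyI hadj => mem_arc_of_cycleGraph_adj hz hadj ?_ ?_
  · rintro rfl; exact ha hyI
  · rintro rfl; exact Nat.find_spec hexit hyI

theorem connSet_cycleGraph_iff (hn : 2 ≤ n) {I : Finset (Fin n)} :
    ConnSet (cycleGraph n) I ↔ ∃ a : Fin n, ∃ m, 0 < m ∧ m ≤ n ∧ I = arc a m :=
  ⟨exists_eq_arc_of_connSet, fun ⟨a, _, hm, _, hI⟩ => hI ▸ connSet_arc hn a hm⟩

theorem natCast_injOn_range :
    Set.InjOn (fun t : ℕ => (t : Fin n)) (Finset.range n) := fun s hs t ht hst => by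
  simpa [Fin.val_cast_of_lt (Finset.mem_range.1 hs), Fin.val_cast_of_lt (Finset.mem_range.1 ht)]
    using congrArg Fin.val hst

variable (n) in
noncomputable def shiPotential (k : ℕ) : (Fin (n + 1) → ℚ) →ₗ[ℚ] ℚ :=
  coord (k : Fin n).castSucc - ((k / n : ℕ) : ℚ) • coord (Fin.last n)

theorem shiPotential_add_mul (k q : ℕ) :
    shiPotential n (k + n * q) = shiPotential n k - (q : ℚ) • coord (Fin.last n) := by
  simp only [shiPotential, Nat.cast_add, Nat.cast_mul, Fin.natCast_self, zero_mul, add_zero,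
    Nat.add_mul_div_left _ _ (Nat.pos_of_neZero n), add_smul]
  abel

theorem shiPotential_val (i : Fin n) : shiPotential n i = coord i.castSucc := by
  simp [shiPotential, Nat.div_eq_of_lt i.isLt]

theorem shiPotential_val_add (i : Fin n) :
    shiPotential n (i + n) = coord i.castSucc - coord (Fin.last n) := by
  simpa [shiPotential_val] using shiPotential_add_mul (n := n) i 1

theorem coord_comp_shiT_val (i : Fin n) :
    (coord i).comp (shiT n) = shiPotential n (i + 1) - shiPotential n i := by
  rw [coord, shiT, LinearMap.proj_pi, shiPotential_val]
  split_ifs with h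
  · rw [show (i : ℕ) + 1 = ((⟨i + 1, h⟩ : Fin n) : ℕ) from rfl, shiPotential_val]
    rfl
  · rw [show (i : ℕ) + 1 = ((0 : Fin n) : ℕ) + n * 1 by simp; omega, shiPotential_add_mul,
      shiPotential_val]
    simp only [Fin.castSucc_zero, Nat.cast_one, one_smul]
    exact sub_right_comm _ _ _

theorem coord_comp_shiT (k : ℕ) :
    (coord (k : Fin n)).comp (shiT n) = shiPotential n (k + 1) - shiPotential n k := by
  have hk : (k : Fin n) = ⟨k % n, Nat.mod_lt k (Nat.pos_of_neZero n)⟩ :=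
    Fin.ext (Fin.val_natCast k n)
  conv_rhs =>
    rw [← Nat.mod_add_div k n, add_right_comm, shiPotential_add_mul, shiPotential_add_mul]
  rw [hk, coord_comp_shiT_val, sub_sub_sub_cancel_right]

theorem linForm_arc_comp_shiT (a : Fin n) {m : ℕ} (hm : m ≤ n) :
    (linForm (arc a m)).comp (shiT n) = shiPotential n (a + m) - shiPotential n a := by
  have hinj : Set.InjOn (fun t : ℕ => a + (t : Fin n)) (Finset.range m) := fun s hs t ht hst =>
    natCast_injOn_range (Finset.range_mono hm hs) (Finset.range_mono hm ht) (add_left_cancel hst)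
  refine LinearMap.ext fun x => ?_
  have hstep (t : ℕ) : (LinearMap.proj (a + (t : Fin n)) : (Fin n → ℚ) →ₗ[ℚ] ℚ) (shiT n x) =
      shiPotential n (a + (t + 1)) x - shiPotential n (a + t) x := by
    rw [show a + (t : Fin n) = ((a + t : ℕ) : Fin n) by push_cast; rfl]
    exact LinearMap.congr_fun (coord_comp_shiT (a + t)) x
  simp only [linForm, arc, Finset.sum_image hinj, LinearMap.comp_apply, LinearMap.sum_apply,
    hstep]
  simpa using Finset.sum_range_sub (fun t => shiPotential n (a + t) x) m

theorem ker_shiPotential_sub_mem_shiCone (a : Fin n) {m : ℕ} (hm₀ : 0 < m) (hm : m ≤ n) :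
    LinearMap.ker (shiPotential n (a + m) - shiPotential n a) ∈ shiCone n := by
  rw [shiPotential_val]
  rcases lt_or_ge ((a : ℕ) + m) n with h | h
  · refine Or.inl ⟨a, ⟨a + m, h⟩, Fin.lt_def.2 (by simpa using hm₀), ?_⟩
    rw [show shiPotential n (a + m) = coord (⟨a + m, h⟩ : Fin n).castSucc from
        shiPotential_val (⟨a + m, h⟩ : Fin n),
      ← LinearMap.ker_neg, neg_sub]
  obtain ⟨i, hi⟩ : ∃ i : Fin n, (i : ℕ) + n = a + m := ⟨⟨a + m - n, by omega⟩, by simp; omega⟩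
  rw [← hi, shiPotential_val_add]
  rcases hm.lt_or_eq with hm | rfl
  · exact Or.inr (Or.inl ⟨i, a, Fin.lt_def.2 (by omega), by rw [sub_right_comm]⟩)
  · obtain rfl : i = a := Fin.ext (by omega)
    exact Or.inr (Or.inr (by rw [sub_sub_cancel_left, LinearMap.ker_neg]))

theorem exists_ker_shiPotential_sub_eq {H : Submodule ℚ (Fin (n + 1) → ℚ)} (hH : H ∈ shiCone n) :
    ∃ a : Fin n, ∃ m, 0 < m ∧ m ≤ n ∧
      LinearMap.ker (shiPotential n (a + m) - shiPotential n a) = H := by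
  rcases hH with ⟨i, j, hij, rfl⟩ | ⟨i, j, hij, rfl⟩ | rfl
  · have := Fin.lt_def.1 hij
    refine ⟨i, j - i, by omega, by omega, ?_⟩
    rw [Nat.add_sub_cancel' this.le, shiPotential_val, shiPotential_val, ← LinearMap.ker_neg,
      neg_sub]
  · have := Fin.lt_def.1 hij
    refine ⟨j, n - j + i, by omega, by omega, ?_⟩
    rw [show (j : ℕ) + (n - j + i) = i + n by omega, shiPotential_val_add, shiPotential_val,
      sub_right_comm]
  · refine ⟨0, n, Nat.pos_of_neZero n, le_rfl, ?_⟩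
    rw [shiPotential_val_add, shiPotential_val, sub_sub_cancel_left, LinearMap.ker_neg]

theorem shiT_surjective : Function.Surjective (shiT n) := by
  intro y
  refine ⟨Fin.snoc (fun j : Fin n => ∑ i ∈ Finset.Iio j, y i) (-∑ i, y i), funext fun a => ?_⟩
  simp only [shiT, LinearMap.pi_apply]
  split_ifs with h <;> simp only [LinearMap.sub_apply, coord, LinearMap.proj_apply]
  · have hsucc : a.succ = (⟨a + 1, h⟩ : Fin n).castSucc := rfl
    have hIio : Finset.Iio (⟨a + 1, h⟩ : Fin n) = insert a (Finset.Iio a) := by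
      ext i; simp [Fin.lt_def]
    rw [hsucc, Fin.snoc_castSucc, Fin.snoc_castSucc, hIio, Finset.sum_insert (by simp),
      add_sub_cancel_right]
  · have hIio : Finset.univ = insert a (Finset.Iio a) := by
      ext i; simp; omega
    rw [← Fin.castSucc_zero, Fin.snoc_castSucc, Fin.snoc_castSucc, Fin.snoc_last, hIio,
      Finset.sum_insert (by simp), Finset.Iio_eq_empty.2 fun b _ => Fin.zero_le b]
    simp

theorem comap_shiT_ker_linForm_arc (a : Fin n) {m : ℕ} (hm : m ≤ n) :
    (LinearMap.ker (linForm (arc a m))).comap (shiT n) =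
      LinearMap.ker (shiPotential n (a + m) - shiPotential n a) := by
  rw [← LinearMap.ker_comp, linForm_arc_comp_shiT a hm]

theorem image_comap_shiT_csa_cycleGraph (hn : 2 ≤ n) :
    Submodule.comap (shiT n) '' csa (cycleGraph n) = shiCone n := by
  ext H
  simp only [csa, connSet_cycleGraph_iff hn, Set.mem_image]
  constructor
  · rintro ⟨_, ⟨I, ⟨a, m, hm₀, hm, rfl⟩, rfl⟩, rfl⟩
    rw [comap_shiT_ker_linForm_arc a hm]
    exact ker_shiPotential_sub_mem_shiCone a hm₀ hm
  · intro hH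
    obtain ⟨a, m, hm₀, hm, rfl⟩ := exists_ker_shiPotential_sub_eq hH
    exact ⟨_, ⟨arc a m, ⟨a, m, hm₀, hm, rfl⟩, rfl⟩, comap_shiT_ker_linForm_arc a hm⟩

end CycleShi

/-- For `n ≥ 3`, the injective linear map
`φ = (shiT n).dualMap : (ℚ^n)^* → (ℚ^{n+1})^*` (given by `φ(x_i) = x_{i+1} − x_i`
for `i < n` and `φ(x_n) = x_1 − x_n − x_{n+1}`) maps the hyperplanes of the connected
subgraph arrangement of the cycle `C_n` bijectively onto the hyperplanes of the cone of
the `n`-th Shi arrangement; on hyperplanes, `H = ker α ↦ ker (φ α)` is exactly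
`H ↦ Submodule.comap (shiT n) H`. -/
theorem csa_cycle_shi (n : ℕ) (hn : 3 ≤ n) :
    Function.Injective (shiT n).dualMap ∧
      Set.BijOn (fun H => Submodule.comap (shiT n) H)
        (csa (SimpleGraph.cycleGraph n)) (shiCone n) := by
  have : NeZero n := ⟨by omega⟩
  have hT : Function.Surjective (shiT n) := CycleShi.shiT_surjective
  refine ⟨LinearMap.dualMap_injective_of_surjective hT, ?_⟩
  rw [← CycleShi.image_comap_shiT_csa_cycleGraph (by omega)]
  exact (Submodule.comap_injective_of_surjective hT).injOn.bijOn_image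
end

section
/- Let n ≥ 1 and let A_1, A_2, A_3 ⊆ [n] be pairwise distinct nonempty subsets. The following are equivalent: (i) the span in ℚ^n of the characteristic vectors χ_{A_1}, χ_{A_2}, χ_{A_3} has dimension 2 (equivalently, the intersection H_{A_1} ∩ H_{A_2} ∩ H_{A_3} has codimension 2); (ii) A_{i_1} ∪ A_{i_2} = A_{i_3} with A_{i_1} ∩ A_{i_2} = ∅ for some choice of pairwise distinct indices 1 ≤ i_1, i_2, i_3 ≤ 3. -/
/-- The 0/1 characteristic vector of a subset `A ⊆ [n]` in `ℚ^n`. -/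
def charVec {n : ℕ} (A : Finset (Fin n)) : Fin n → ℚ :=
  fun i => if i ∈ A then 1 else 0


namespace CircuitAux

variable {n : ℕ}

lemma cv_one {A : Finset (Fin n)} {j : Fin n} (h : j ∈ A) : charVec A j = 1 := if_pos h
lemma cv_zero {A : Finset (Fin n)} {j : Fin n} (h : j ∉ A) : charVec A j = 0 := if_neg h

lemma eq_of_dep {A B : Finset (Fin n)} {c d : ℚ}
    (h : ∀ j, c * charVec A j + d * charVec B j = 0)
    (hA : A.Nonempty) (hc : c ≠ 0) : A = B := by
  obtain ⟨j0, hj0⟩ := hA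
  have hd : d = -c := by
    have h0 := h j0
    rw [cv_one hj0] at h0
    by_cases hB : j0 ∈ B
    · rw [cv_one hB] at h0; linarith
    · rw [cv_zero hB] at h0; exact absurd (by linarith) hc
  ext i
  constructor
  · intro hi
    have h0 := h i
    rw [cv_one hi] at h0
    by_contra hB
    rw [cv_zero hB] at h0
    exact hc (by linarith)
  · intro hi
    have h0 := h i
    rw [cv_one hi] at h0
    by_contra hA'
    rw [cv_zero hA', hd] at h0
    exact hc (by linarith)

lemma two_zero {B C : Finset (Fin n)} {b c : ℚ}
    (h : ∀ j, b * charVec B j + c * charVec C j = 0)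
    (hB : B.Nonempty) (hC : C.Nonempty) (hBC : B ≠ C) : b = 0 ∧ c = 0 := by
  have hb : b = 0 := by
    by_contra hb
    exact hBC (eq_of_dep h hB hb)
  refine ⟨hb, ?_⟩
  obtain ⟨j, hj⟩ := hC
  have h0 := h j
  rw [hb, cv_one hj] at h0
  simpa using h0

lemma pair_neg {A B C : Finset (Fin n)} {a b c : ℚ}
    (h : ∀ j, a * charVec A j + b * charVec B j + c * charVec C j = 0)
    (ha : a ≠ 0) (hb : b ≠ 0) (hAB : A ≠ B) : a + c = 0 ∨ b + c = 0 := by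
  have hex : ∃ j, (j ∈ A ∧ j ∉ B) ∨ (j ∈ B ∧ j ∉ A) := by
    by_contra hcon
    push_neg at hcon
    exact hAB (Finset.ext fun j => ⟨(hcon j).1, (hcon j).2⟩)
  obtain ⟨j, hj | hj⟩ := hex
  · have h0 := h j
    rw [cv_one hj.1, cv_zero hj.2] at h0
    by_cases hC : j ∈ C
    · rw [cv_one hC] at h0; left; linarith
    · rw [cv_zero hC] at h0; exact absurd (by linarith) ha
  · have h0 := h j
    rw [cv_one hj.1, cv_zero hj.2] at h0
    by_cases hC : j ∈ C
    · rw [cv_one hC] at h0; right; linarith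
    · rw [cv_zero hC] at h0; exact absurd (by linarith) hb

lemma chi_rel {A B C : Finset (Fin n)} {a b c : ℚ} (ha : a ≠ 0)
    (hb : b = -a) (hc : c = -a)
    (hsum : ∀ j, a * charVec A j + b * charVec B j + c * charVec C j = 0) (j : Fin n) :
    charVec A j = charVec B j + charVec C j := by
  have h2 : a * (charVec A j - charVec B j - charVec C j) = 0 := by
    linear_combination hsum j - charVec B j * hb - charVec C j * hc
  rcases mul_eq_zero.mp h2 with h | h
  · exact absurd h ha
  · linarith

lemma union_of_eq {A B C : Finset (Fin n)}
    (h : ∀ j, charVec A j = charVec B j + charVec C j) :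
    Disjoint B C ∧ B ∪ C = A := by
  constructor
  · rw [Finset.disjoint_left]
    intro i hiB hiC
    have h0 := h i
    rw [cv_one hiB, cv_one hiC] at h0
    by_cases hA : i ∈ A
    · rw [cv_one hA] at h0; norm_num at h0
    · rw [cv_zero hA] at h0; norm_num at h0
  · ext i
    have h0 := h i
    by_cases hA : i ∈ A <;> by_cases hB : i ∈ B <;> by_cases hC : i ∈ C <;>
      simp only [charVec, if_pos, if_neg, hA, hB, hC, if_true, if_false] at h0 <;>
      simp [Finset.mem_union, hA, hB, hC] <;> norm_num at h0

end CircuitAux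

open CircuitAux in
/-- For `n ≥ 1` and pairwise distinct nonempty subsets
`A₁, A₂, A₃ ⊆ [n]`, the span of the characteristic vectors `χ_{A₁}, χ_{A₂}, χ_{A₃}`
in `ℚ^n` has dimension `2` if and only if `A_{i₁} ∪̇ A_{i₂} = A_{i₃}` (a disjoint
union) for some choice of pairwise distinct indices `i₁, i₂, i₃`; in the latter case
`{A₁, A₂, A₃}` is called a circuit-triple. -/
theorem rank_two_iff_circuitTriple (n : ℕ) (hn : 1 ≤ n) (A : Fin 3 → Finset (Fin n))
    (hinj : Function.Injective A) (hne : ∀ i, (A i).Nonempty) :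
    Module.finrank ℚ ↥(Submodule.span ℚ (Set.range fun i => charVec (A i))) = 2 ↔
      ∃ σ : Equiv.Perm (Fin 3),
        Disjoint (A (σ 0)) (A (σ 1)) ∧ A (σ 0) ∪ A (σ 1) = A (σ 2) := by
  classical
  have hd01 : A 0 ≠ A 1 := fun h => by have := hinj h; simp at this
  have hd02 : A 0 ≠ A 2 := fun h => by have := hinj h; simp at this
  have hd12 : A 1 ≠ A 2 := fun h => by have := hinj h; simp at this
  constructor
  · intro hrank
    have hdep : ¬ LinearIndependent ℚ (fun i => charVec (A i)) := by
      intro hind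
      have hc := finrank_span_eq_card hind
      rw [hrank] at hc
      simp at hc
    rw [Fintype.not_linearIndependent_iff] at hdep
    obtain ⟨g, hg, i0, hi0⟩ := hdep
    have hsum : ∀ j, g 0 * charVec (A 0) j + g 1 * charVec (A 1) j + g 2 * charVec (A 2) j = 0 := by
      intro j
      have h := congrFun hg j
      simpa [Fin.sum_univ_three] using h
    have h0 : g 0 ≠ 0 := by
      intro h0
      have hs : ∀ j, g 1 * charVec (A 1) j + g 2 * charVec (A 2) j = 0 := fun j => by
        linear_combination hsum j - charVec (A 0) j * h0
      have h12 := two_zero hs (hne 1) (hne 2) hd12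
      fin_cases i0 <;> simp_all
    have h1 : g 1 ≠ 0 := by
      intro h1
      have hs : ∀ j, g 0 * charVec (A 0) j + g 2 * charVec (A 2) j = 0 := fun j => by
        linear_combination hsum j - charVec (A 1) j * h1
      have h12 := two_zero hs (hne 0) (hne 2) hd02
      fin_cases i0 <;> simp_all
    have h2 : g 2 ≠ 0 := by
      intro h2
      have hs : ∀ j, g 0 * charVec (A 0) j + g 1 * charVec (A 1) j = 0 := fun j => by
        linear_combination hsum j - charVec (A 2) j * h2
      have h12 := two_zero hs (hne 0) (hne 1) hd01
      fin_cases i0 <;> simp_all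
    have hsum2 : ∀ j, g 0 * charVec (A 0) j + g 2 * charVec (A 2) j + g 1 * charVec (A 1) j = 0 :=
      fun j => by linear_combination hsum j
    have hsum3 : ∀ j, g 1 * charVec (A 1) j + g 2 * charVec (A 2) j + g 0 * charVec (A 0) j = 0 :=
      fun j => by linear_combination hsum j
    have hsum4 : ∀ j, g 2 * charVec (A 2) j + g 0 * charVec (A 0) j + g 1 * charVec (A 1) j = 0 :=
      fun j => by linear_combination hsum j
    have hsum3' : ∀ j, g 1 * charVec (A 1) j + g 0 * charVec (A 0) j + g 2 * charVec (A 2) j = 0 :=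
      fun j => by linear_combination hsum j
    have d1 : g 0 + g 2 = 0 ∨ g 1 + g 2 = 0 := pair_neg hsum h0 h1 hd01
    have d2 : g 0 + g 1 = 0 ∨ g 2 + g 1 = 0 := pair_neg hsum2 h0 h2 hd02
    have d3 : g 1 + g 0 = 0 ∨ g 2 + g 0 = 0 := pair_neg hsum3 h1 h2 hd12
    -- helpers to build the three kinds of conclusions
    have mk0 : (∀ j, charVec (A 0) j = charVec (A 1) j + charVec (A 2) j) →
        ∃ σ : Equiv.Perm (Fin 3),
          Disjoint (A (σ 0)) (A (σ 1)) ∧ A (σ 0) ∪ A (σ 1) = A (σ 2) := by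
      intro h
      obtain ⟨hdisj, huni⟩ := union_of_eq h
      refine ⟨finRotate 3, ?_⟩
      have e0 : (finRotate 3 : Equiv.Perm (Fin 3)) 0 = 1 := by decide
      have e1 : (finRotate 3 : Equiv.Perm (Fin 3)) 1 = 2 := by decide
      have e2 : (finRotate 3 : Equiv.Perm (Fin 3)) 2 = 0 := by decide
      rw [e0, e1, e2]
      exact ⟨hdisj, huni⟩
    have mk1 : (∀ j, charVec (A 1) j = charVec (A 0) j + charVec (A 2) j) →
        ∃ σ : Equiv.Perm (Fin 3),
          Disjoint (A (σ 0)) (A (σ 1)) ∧ A (σ 0) ∪ A (σ 1) = A (σ 2) := by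
      intro h
      obtain ⟨hdisj, huni⟩ := union_of_eq h
      refine ⟨Equiv.swap 1 2, ?_⟩
      have e0 : (Equiv.swap 1 2 : Equiv.Perm (Fin 3)) 0 = 0 := by decide
      have e1 : (Equiv.swap 1 2 : Equiv.Perm (Fin 3)) 1 = 2 := by decide
      have e2 : (Equiv.swap 1 2 : Equiv.Perm (Fin 3)) 2 = 1 := by decide
      rw [e0, e1, e2]
      exact ⟨hdisj, huni⟩
    have mk2 : (∀ j, charVec (A 2) j = charVec (A 0) j + charVec (A 1) j) →
        ∃ σ : Equiv.Perm (Fin 3),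
          Disjoint (A (σ 0)) (A (σ 1)) ∧ A (σ 0) ∪ A (σ 1) = A (σ 2) := by
      intro h
      obtain ⟨hdisj, huni⟩ := union_of_eq h
      exact ⟨Equiv.refl _, hdisj, huni⟩
    rcases d1 with e1 | e1 <;> rcases d2 with e2 | e2 <;> rcases d3 with e3 | e3
    · exact mk0 (chi_rel h0 (by linarith) (by linarith) hsum)
    · exact mk0 (chi_rel h0 (by linarith) (by linarith) hsum)
    · exact absurd (by linarith : g 0 = 0) h0
    · exact mk2 (chi_rel h2 (by linarith) (by linarith) hsum4)
    · exact mk1 (chi_rel h1 (by linarith) (by linarith) hsum3')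
    · exact absurd (by linarith : g 0 = 0) h0
    · exact mk1 (chi_rel h1 (by linarith) (by linarith) hsum3')
    · exact mk2 (chi_rel h2 (by linarith) (by linarith) hsum4)
  · rintro ⟨σ, hdisj, huni⟩
    have hadd : charVec (A (σ 2)) = charVec (A (σ 0)) + charVec (A (σ 1)) := by
      funext j
      rw [← huni]
      by_cases h0 : j ∈ A (σ 0) <;> by_cases h1 : j ∈ A (σ 1)
      · exact absurd h1 (Finset.disjoint_left.mp hdisj h0)
      all_goals simp [charVec, Finset.mem_union, h0, h1]
    have hind : LinearIndependent ℚ ![charVec (A (σ 0)), charVec (A (σ 1))] := by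
      rw [LinearIndependent.pair_iff]
      intro s t hst
      obtain ⟨j0, hj0⟩ := hne (σ 0)
      obtain ⟨j1, hj1⟩ := hne (σ 1)
      have e0 := congrFun hst j0
      have e1 := congrFun hst j1
      have hn0 : j0 ∉ A (σ 1) := Finset.disjoint_left.mp hdisj hj0
      have hn1 : j1 ∉ A (σ 0) := Finset.disjoint_right.mp hdisj hj1
      simp [charVec, hj0, hj1, hn0, hn1] at e0 e1
      exact ⟨e0, e1⟩
    have hspan : Submodule.span ℚ (Set.range fun i => charVec (A i)) =
        Submodule.span ℚ (Set.range ![charVec (A (σ 0)), charVec (A (σ 1))]) := by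
      apply le_antisymm
      · rw [Submodule.span_le]
        rintro x ⟨i, rfl⟩
        have m0 : charVec (A (σ 0)) ∈
            Submodule.span ℚ (Set.range ![charVec (A (σ 0)), charVec (A (σ 1))]) :=
          Submodule.subset_span ⟨0, rfl⟩
        have m1 : charVec (A (σ 1)) ∈
            Submodule.span ℚ (Set.range ![charVec (A (σ 0)), charVec (A (σ 1))]) :=
          Submodule.subset_span ⟨1, rfl⟩
        obtain ⟨j, rfl⟩ : ∃ j, i = σ j := ⟨σ.symm i, (σ.apply_symm_apply i).symm⟩
        fin_cases j
        · exact m0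
        · exact m1
        · show charVec (A (σ 2)) ∈ _
          rw [hadd]
          exact add_mem m0 m1
      · rw [Submodule.span_le]
        rintro x ⟨i, rfl⟩
        fin_cases i
        · exact Submodule.subset_span ⟨σ 0, rfl⟩
        · exact Submodule.subset_span ⟨σ 1, rfl⟩
    rw [hspan, finrank_span_eq_card hind]
    simp
end

section
/- Let I_1,…,I_m ⊆ [n] be distinct nonempty subsets defining the hyperplanes of a 0/1-arrangement 𝒜' = {H_{I_1},…,H_{I_m}} in ℚ^n, and let I ⊆ [n] be a nonempty subset with H_I ∉ 𝒜'. Then m − |{H_{I_1} ∩ H_I, …, H_{I_m} ∩ H_I}| equals the number of circuit-triples among the sets {I_1,…,I_m, I} that involve I. -/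
/-- Three pairwise distinct subsets of `[n]` form a circuit-triple if one of them is
the disjoint union of the other two. -/
def CircuitTriple {n : ℕ} (A B C : Finset (Fin n)) : Prop :=
  A ≠ B ∧ A ≠ C ∧ B ≠ C ∧
    ((Disjoint A B ∧ A ∪ B = C) ∨ (Disjoint A C ∧ A ∪ C = B) ∨
      (Disjoint B C ∧ B ∪ C = A))

lemma linForm_apply {n : ℕ} (A : Finset (Fin n)) (x : Fin n → ℚ) :
    linForm A x = ∑ i ∈ A, x i := by
  simp [linForm]

/-- The distinguished "partner" of `A` relative to `Z`. -/
def partner {n : ℕ} (Z A : Finset (Fin n)) : Finset (Fin n) :=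
  if Disjoint A Z then A ∪ Z
  else if A ⊆ Z then Z \ A
  else if Z ⊆ A then A \ Z
  else ∅

/-- The intersection of the hyperplanes of `A` and `Z`. -/
noncomputable def kerInf {n : ℕ} (Z A : Finset (Fin n)) : Submodule ℚ (Fin n → ℚ) :=
  LinearMap.ker (linForm A) ⊓ LinearMap.ker (linForm Z)

lemma inf_eq_of_circuit {n : ℕ} {A B Z : Finset (Fin n)} (h : CircuitTriple A B Z) :
    kerInf Z A = kerInf Z B := by
  have key : ∀ x : Fin n → ℚ, ∑ i ∈ Z, x i = 0 →
      (∑ i ∈ A, x i = 0 ↔ ∑ i ∈ B, x i = 0) := by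
    obtain ⟨-, -, -, (⟨hd, hu⟩ | ⟨hd, hu⟩ | ⟨hd, hu⟩)⟩ := h <;> intro x hx <;>
      have hs := Finset.sum_union (f := x) hd <;> rw [hu] at hs <;> constructor <;>
      intro h0 <;> linarith
  ext x
  simp only [kerInf, Submodule.mem_inf, LinearMap.mem_ker, linForm_apply]
  constructor
  · rintro ⟨h1, h2⟩; exact ⟨(key x h2).mp h1, h2⟩
  · rintro ⟨h1, h2⟩; exact ⟨(key x h2).mpr h1, h2⟩

lemma circuit_of_partner {n : ℕ} {A B Z : Finset (Fin n)} (hB : B.Nonempty)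
    (hAB : A ≠ B) (hAZ : A ≠ Z) (hBZ : B ≠ Z) (hp : B = partner Z A) :
    CircuitTriple A B Z := by
  unfold partner at hp
  split_ifs at hp with hd hsub hsup
  · exact ⟨hAB, hAZ, hBZ, Or.inr (Or.inl ⟨hd, hp.symm⟩)⟩
  · refine ⟨hAB, hAZ, hBZ, Or.inl ⟨?_, ?_⟩⟩
    · rw [hp]; exact Finset.disjoint_sdiff
    · rw [hp]; exact Finset.union_sdiff_of_subset hsub
  · refine ⟨hAB, hAZ, hBZ, Or.inr (Or.inr ⟨?_, ?_⟩)⟩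
    · rw [hp]; exact Finset.sdiff_disjoint
    · rw [hp]; exact Finset.sdiff_union_of_subset hsup
  · exact absurd hp (Finset.nonempty_iff_ne_empty.mp hB)

lemma eq_partner {n : ℕ} {A B Z : Finset (Fin n)} (hB : B.Nonempty)
    (hAB : A ≠ B) (hAZ : A ≠ Z) (hBZ : B ≠ Z)
    (hker : ∀ x : Fin n → ℚ, ∑ i ∈ A, x i = 0 → ∑ i ∈ Z, x i = 0 → ∑ i ∈ B, x i = 0) :
    B = partner Z A := by
  classical
  clear hAZ
  have single : ∀ (i : Fin n) (S : Finset (Fin n)),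
      ∑ t ∈ S, (Pi.single i (1:ℚ)) t = if i ∈ S then 1 else 0 :=
    fun i S => Finset.sum_pi_single' i 1 S
  have sumd : ∀ (i j : Fin n) (S : Finset (Fin n)),
      ∑ t ∈ S, ((Pi.single i 1 - Pi.single j 1 : Fin n → ℚ)) t
        = (if i ∈ S then (1:ℚ) else 0) - (if j ∈ S then 1 else 0) := by
    intro i j S
    simp only [Pi.sub_apply, Finset.sum_sub_distrib, single]
  have sumc : ∀ (i j k : Fin n) (S : Finset (Fin n)),
      ∑ t ∈ S, ((Pi.single i 1 + Pi.single j 1 - Pi.single k 1 : Fin n → ℚ)) t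
        = (if i ∈ S then (1:ℚ) else 0) + (if j ∈ S then 1 else 0)
            - (if k ∈ S then 1 else 0) := by
    intro i j k S
    simp only [Pi.sub_apply, Pi.add_apply, Finset.sum_sub_distrib,
      Finset.sum_add_distrib, single]
  have houter : ∀ i : Fin n, i ∉ A → i ∉ Z → i ∉ B := by
    intro i hiA hiZ hiB
    have := hker (Pi.single i 1) (by rw [single]; simp [hiA]) (by rw [single]; simp [hiZ])
    rw [single] at this; simp [hiB] at this
  have hmem : ∀ b ∈ B, b ∈ A ∨ b ∈ Z := by
    intro b hb
    by_contra hc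
    push_neg at hc
    exact houter b hc.1 hc.2 hb
  have hpair : ∀ i j : Fin n, (i ∈ A ↔ j ∈ A) → (i ∈ Z ↔ j ∈ Z) → (i ∈ B ↔ j ∈ B) := by
    intro i j hA' hZ'
    have hcon := hker ((Pi.single i 1 - Pi.single j 1 : Fin n → ℚ))
      (by rw [sumd, if_congr hA' rfl rfl, sub_self])
      (by rw [sumd, if_congr hZ' rfl rfl, sub_self])
    rw [sumd] at hcon
    by_cases hi : i ∈ B <;> by_cases hj : j ∈ B <;> simp [hi, hj] at hcon ⊢
  have hcross : ∀ i j k : Fin n, i ∈ A → i ∉ Z → j ∈ Z → j ∉ A → k ∈ A → k ∈ Z →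
      ((if i ∈ B then (1:ℚ) else 0) + (if j ∈ B then 1 else 0)
        = if k ∈ B then 1 else 0) := by
    intro i j k hiA hiZ hjZ hjA hkA hkZ
    have hcon := hker ((Pi.single i 1 + Pi.single j 1 - Pi.single k 1 : Fin n → ℚ))
      (by rw [sumc]; simp [hiA, hjA, hkA])
      (by rw [sumc]; simp [hiZ, hjZ, hkZ])
    rw [sumc] at hcon
    linarith
  unfold partner
  split_ifs with hd hsub hsup
  · -- Disjoint A Z : B = A ∪ Z
    have hdAZ := Finset.disjoint_left.mp hd
    have hAc : ∀ a ∈ A, ∀ a' ∈ A, a ∈ B → a' ∈ B := fun a ha a' ha' hab =>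
      (hpair a a' (iff_of_true ha ha')
        (iff_of_false (fun h => hdAZ ha h) (fun h => hdAZ ha' h))).mp hab
    have hZc : ∀ z ∈ Z, ∀ z' ∈ Z, z ∈ B → z' ∈ B := fun z hz z' hz' hzb =>
      (hpair z z' (iff_of_false (fun h => hdAZ h hz) (fun h => hdAZ h hz'))
        (iff_of_true hz hz')).mp hzb
    by_cases hxA : ∃ a ∈ A, a ∈ B
    · by_cases hxZ : ∃ z ∈ Z, z ∈ B
      · obtain ⟨a, ha, hab⟩ := hxA
        obtain ⟨z, hz, hzb⟩ := hxZ
        apply Finset.Subset.antisymm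
        · intro x hx
          rcases hmem x hx with h | h
          · exact Finset.mem_union_left _ h
          · exact Finset.mem_union_right _ h
        · intro x hx
          rcases Finset.mem_union.mp hx with h | h
          · exact hAc a ha x h hab
          · exact hZc z hz x h hzb
      · push_neg at hxZ
        exfalso; apply hAB
        obtain ⟨a0, ha0, hab⟩ := hxA
        apply Finset.Subset.antisymm
        · intro a ha; exact hAc a0 ha0 a ha hab
        · intro x hx
          rcases hmem x hx with h | h
          · exact h
          · exact absurd hx (hxZ x h)
    · push_neg at hxA
      by_cases hxZ : ∃ z ∈ Z, z ∈ B
      · exfalso; apply hBZ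
        obtain ⟨z0, hz0, hzb⟩ := hxZ
        apply Finset.Subset.antisymm
        · intro x hx
          rcases hmem x hx with h | h
          · exact absurd hx (hxA x h)
          · exact h
        · intro z hz; exact hZc z0 hz0 z hz hzb
      · push_neg at hxZ
        exfalso
        obtain ⟨b, hb⟩ := hB
        rcases hmem b hb with h | h
        · exact hxA b h hb
        · exact hxZ b h hb
  · -- A ⊆ Z : B = Z \ A
    have hBZ' : ∀ b ∈ B, b ∈ Z := by
      intro b hb
      rcases hmem b hb with h | h
      · exact hsub h
      · exact h
    have hAc : ∀ a ∈ A, ∀ a' ∈ A, a ∈ B → a' ∈ B := fun a ha a' ha' hab =>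
      (hpair a a' (iff_of_true ha ha') (iff_of_true (hsub ha) (hsub ha'))).mp hab
    have hDc : ∀ d, d ∈ Z → d ∉ A → ∀ d', d' ∈ Z → d' ∉ A → d ∈ B → d' ∈ B :=
      fun d hdZ hdA d' hdZ' hdA' hdb =>
        (hpair d d' (iff_of_false hdA hdA') (iff_of_true hdZ hdZ')).mp hdb
    by_cases hxA : ∃ a ∈ A, a ∈ B
    · by_cases hxD : ∃ d, d ∈ Z ∧ d ∉ A ∧ d ∈ B
      · exfalso; apply hBZ
        obtain ⟨a0, ha0, hab⟩ := hxA
        obtain ⟨d0, hd0Z, hd0A, hdb⟩ := hxD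
        apply Finset.Subset.antisymm
        · exact fun x hx => hBZ' x hx
        · intro z hz
          by_cases hzA : z ∈ A
          · exact hAc a0 ha0 z hzA hab
          · exact hDc d0 hd0Z hd0A z hz hzA hdb
      · push_neg at hxD
        exfalso; apply hAB
        obtain ⟨a0, ha0, hab⟩ := hxA
        apply Finset.Subset.antisymm
        · intro a ha; exact hAc a0 ha0 a ha hab
        · intro x hx
          by_contra hxA'
          exact hxD x (hBZ' x hx) hxA' hx
    · push_neg at hxA
      by_cases hxD : ∃ d, d ∈ Z ∧ d ∉ A ∧ d ∈ B
      · obtain ⟨d0, hd0Z, hd0A, hdb⟩ := hxD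
        apply Finset.Subset.antisymm
        · intro x hx
          rw [Finset.mem_sdiff]
          exact ⟨hBZ' x hx, fun hxA' => hxA x hxA' hx⟩
        · intro x hx
          rw [Finset.mem_sdiff] at hx
          exact hDc d0 hd0Z hd0A x hx.1 hx.2 hdb
      · push_neg at hxD
        exfalso
        obtain ⟨b, hb⟩ := hB
        by_cases hbA : b ∈ A
        · exact hxA b hbA hb
        · exact hxD b (hBZ' b hb) hbA hb
  · -- Z ⊆ A : B = A \ Z
    have hBA' : ∀ b ∈ B, b ∈ A := by
      intro b hb
      rcases hmem b hb with h | h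
      · exact h
      · exact hsup h
    have hZc : ∀ z ∈ Z, ∀ z' ∈ Z, z ∈ B → z' ∈ B := fun z hz z' hz' hzb =>
      (hpair z z' (iff_of_true (hsup hz) (hsup hz')) (iff_of_true hz hz')).mp hzb
    have hDc : ∀ d, d ∈ A → d ∉ Z → ∀ d', d' ∈ A → d' ∉ Z → d ∈ B → d' ∈ B :=
      fun d hdA hdZ d' hdA' hdZ' hdb =>
        (hpair d d' (iff_of_true hdA hdA') (iff_of_false hdZ hdZ')).mp hdb
    by_cases hxZ : ∃ z ∈ Z, z ∈ B
    · by_cases hxD : ∃ d, d ∈ A ∧ d ∉ Z ∧ d ∈ B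
      · exfalso; apply hAB
        obtain ⟨z0, hz0, hzb⟩ := hxZ
        obtain ⟨d0, hd0A, hd0Z, hdb⟩ := hxD
        apply Finset.Subset.antisymm
        · intro a ha
          by_cases haZ : a ∈ Z
          · exact hZc z0 hz0 a haZ hzb
          · exact hDc d0 hd0A hd0Z a ha haZ hdb
        · exact fun x hx => hBA' x hx
      · push_neg at hxD
        exfalso; apply hBZ
        obtain ⟨z0, hz0, hzb⟩ := hxZ
        apply Finset.Subset.antisymm
        · intro x hx
          by_contra hxZ'
          exact hxD x (hBA' x hx) hxZ' hx
        · intro z hz; exact hZc z0 hz0 z hz hzb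
    · push_neg at hxZ
      by_cases hxD : ∃ d, d ∈ A ∧ d ∉ Z ∧ d ∈ B
      · obtain ⟨d0, hd0A, hd0Z, hdb⟩ := hxD
        apply Finset.Subset.antisymm
        · intro x hx
          rw [Finset.mem_sdiff]
          exact ⟨hBA' x hx, fun hxZ' => hxZ x hxZ' hx⟩
        · intro x hx
          rw [Finset.mem_sdiff] at hx
          exact hDc d0 hd0A hd0Z x hx.1 hx.2 hdb
      · push_neg at hxD
        exfalso
        obtain ⟨b, hb⟩ := hB
        by_cases hbZ : b ∈ Z
        · exact hxZ b hbZ hb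
        · exact hxD b (hBA' b hb) hbZ hb
  · -- impossible case
    exfalso
    obtain ⟨k, hkA, hkZ⟩ := Finset.not_disjoint_iff.mp hd
    obtain ⟨i, hiA, hiZ⟩ := Finset.not_subset.mp hsub
    obtain ⟨j, hjZ, hjA⟩ := Finset.not_subset.mp hsup
    have hc := hcross i j k hiA hiZ hjZ hjA hkA hkZ
    have hBA : ∀ x ∈ B, x ∈ A → x ∈ Z → k ∈ B := fun x hx hxA hxZ =>
      (hpair x k (iff_of_true hxA hkA) (iff_of_true hxZ hkZ)).mp hx
    have hBi : ∀ x ∈ B, x ∈ A → x ∉ Z → i ∈ B := fun x hx hxA hxZ =>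
      (hpair x i (iff_of_true hxA hiA) (iff_of_false hxZ hiZ)).mp hx
    have hBj : ∀ x ∈ B, x ∉ A → x ∈ Z → j ∈ B := fun x hx hxA hxZ =>
      (hpair x j (iff_of_false hxA hjA) (iff_of_true hxZ hjZ)).mp hx
    by_cases bi : i ∈ B <;> by_cases bj : j ∈ B <;> by_cases bk : k ∈ B <;>
      simp [bi, bj, bk] at hc
    · -- i ∈ B, j ∉ B, k ∈ B : B = A
      apply hAB
      apply Finset.Subset.antisymm
      · intro a ha
        by_cases haZ : a ∈ Z
        · exact (hpair k a (iff_of_true hkA ha) (iff_of_true hkZ haZ)).mp bk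
        · exact (hpair i a (iff_of_true hiA ha) (iff_of_false hiZ haZ)).mp bi
      · intro x hx
        by_contra hxA
        rcases hmem x hx with h | h
        · exact hxA h
        · exact bj (hBj x hx hxA h)
    · -- i ∉ B, j ∈ B, k ∈ B : B = Z
      apply hBZ
      apply Finset.Subset.antisymm
      · intro x hx
        by_contra hxZ
        rcases hmem x hx with h | h
        · exact bi (hBi x hx h hxZ)
        · exact hxZ h
      · intro z hz
        by_cases hzA : z ∈ A
        · exact (hpair k z (iff_of_true hkA hzA) (iff_of_true hkZ hz)).mp bk
        · exact (hpair j z (iff_of_false hjA hzA) (iff_of_true hjZ hz)).mp bj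
    · -- none in B : B = ∅
      obtain ⟨b, hb⟩ := hB
      by_cases hbA : b ∈ A <;> by_cases hbZ : b ∈ Z
      · exact bk (hBA b hb hbA hbZ)
      · exact bi (hBi b hb hbA hbZ)
      · exact bj (hBj b hb hbA hbZ)
      · rcases hmem b hb with h | h
        · exact hbA h
        · exact hbZ h

open Classical in
/-- Let `𝒜' = {H_{I_1},…,H_{I_m}}` be a 0/1-arrangement in `ℚ^n`
given by distinct nonempty subsets `I_1,…,I_m ⊆ [n]`, and let `I ⊆ [n]` be nonempty
with `H_I ∉ 𝒜'`. Then `m − |{H_{I_1} ∩ H_I, …, H_{I_m} ∩ H_I}|` equals the number of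
circuit-triples among `{I_1,…,I_m,I}` involving `I`. -/
theorem csa_restriction_count (n m : ℕ) (I : Fin m → Finset (Fin n))
    (hinj : Function.Injective I) (hne : ∀ j, (I j).Nonempty)
    (I0 : Finset (Fin n)) (hI0 : I0.Nonempty)
    (hnotin : LinearMap.ker (linForm I0) ∉
      Finset.univ.image fun j => LinearMap.ker (linForm (I j))) :
    m - (Finset.univ.image fun j =>
          LinearMap.ker (linForm (I j)) ⊓ LinearMap.ker (linForm I0)).card =
      (((Finset.univ.image I).powersetCard 2).filter fun p =>
          ∃ A ∈ p, ∃ B ∈ p, A ≠ B ∧ CircuitTriple A B I0).card := by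
  classical
  set S : Finset (Finset (Fin n)) := Finset.univ.image I with hS
  have himg : (Finset.univ.image fun j =>
      LinearMap.ker (linForm (I j)) ⊓ LinearMap.ker (linForm I0)) = S.image (kerInf I0) := by
    rw [hS, Finset.image_image]
    rfl
  have hSmem : ∀ A ∈ S, A.Nonempty ∧ A ≠ I0 := by
    intro A hA
    obtain ⟨j, -, rfl⟩ := Finset.mem_image.mp hA
    refine ⟨hne j, fun heq => ?_⟩
    exact hnotin (Finset.mem_image.mpr ⟨j, Finset.mem_univ j, by rw [heq]⟩)
  have key1 : ∀ A ∈ S, ∀ B ∈ S, A ≠ B → kerInf I0 A = kerInf I0 B → B = partner I0 A := by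
    intro A hA B hB hab heq
    obtain ⟨hAne, hAI0⟩ := hSmem A hA
    obtain ⟨hBne, hBI0⟩ := hSmem B hB
    apply eq_partner hBne hab hAI0 hBI0
    intro x h1 h2
    have hx : x ∈ kerInf I0 A := by
      simp only [kerInf, Submodule.mem_inf, LinearMap.mem_ker, linForm_apply]
      exact ⟨h1, h2⟩
    rw [heq] at hx
    simp only [kerInf, Submodule.mem_inf, LinearMap.mem_ker, linForm_apply] at hx
    exact hx.1
  have key2 : ∀ A ∈ S, ∀ B ∈ S, A ≠ B →
      (kerInf I0 A = kerInf I0 B ↔ CircuitTriple A B I0) := by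
    intro A hA B hB hab
    constructor
    · intro heq
      exact circuit_of_partner (hSmem B hB).1 hab (hSmem A hA).2 (hSmem B hB).2
        (key1 A hA B hB hab heq)
    · intro hc
      exact inf_eq_of_circuit hc
  have hfib_pos : ∀ v ∈ S.image (kerInf I0),
      1 ≤ (S.filter fun A => kerInf I0 A = v).card := by
    intro v hv
    obtain ⟨A, hA, hAv⟩ := Finset.mem_image.mp hv
    exact Finset.card_pos.mpr ⟨A, Finset.mem_filter.mpr ⟨hA, hAv⟩⟩
  have hfib_le : ∀ v ∈ S.image (kerInf I0),
      (S.filter fun A => kerInf I0 A = v).card ≤ 2 := by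
    intro v hv
    obtain ⟨A, hA, hAv⟩ := Finset.mem_image.mp hv
    have hsub2 : (S.filter fun A' => kerInf I0 A' = v) ⊆ insert A {partner I0 A} := by
      intro C hC
      rw [Finset.mem_filter] at hC
      by_cases hCA : C = A
      · simp [hCA]
      · have := key1 A hA C hC.1 (Ne.symm hCA) (by rw [hAv, hC.2])
        simp [this]
    refine le_trans (Finset.card_le_card hsub2) ?_
    refine le_trans (Finset.card_insert_le _ _) ?_
    simp
  have hsum : S.card = ∑ v ∈ S.image (kerInf I0),
      (S.filter fun A => kerInf I0 A = v).card :=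
    Finset.card_eq_sum_card_fiberwise fun A hA => Finset.mem_image_of_mem _ hA
  have hcount : S.card = (S.image (kerInf I0)).card +
      ((S.image (kerInf I0)).filter fun v =>
        (S.filter fun A => kerInf I0 A = v).card = 2).card := by
    rw [hsum, Finset.card_eq_sum_ones (S.image (kerInf I0)), Finset.card_filter,
      ← Finset.sum_add_distrib]
    refine Finset.sum_congr rfl fun v hv => ?_
    have h1 := hfib_pos v hv
    have h2 := hfib_le v hv
    split_ifs with h3 <;> omega
  have hbij : ((S.image (kerInf I0)).filter fun v =>
        (S.filter fun A => kerInf I0 A = v).card = 2).card =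
      ((S.powersetCard 2).filter fun p =>
        ∃ A ∈ p, ∃ B ∈ p, A ≠ B ∧ CircuitTriple A B I0).card := by
    refine Finset.card_bij (fun v _ => S.filter fun A => kerInf I0 A = v) ?_ ?_ ?_
    · intro v hv
      rw [Finset.mem_filter] at hv
      rw [Finset.mem_filter, Finset.mem_powersetCard]
      refine ⟨⟨Finset.filter_subset _ _, hv.2⟩, ?_⟩
      obtain ⟨A, B, hABne, hfibeq⟩ := Finset.card_eq_two.mp hv.2
      have hAf : A ∈ S.filter fun A' => kerInf I0 A' = v := by
        rw [hfibeq]; exact Finset.mem_insert_self _ _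
      have hBf : B ∈ S.filter fun A' => kerInf I0 A' = v := by
        rw [hfibeq]; exact Finset.mem_insert_of_mem (Finset.mem_singleton_self _)
      rw [Finset.mem_filter] at hAf hBf
      refine ⟨A, ?_, B, ?_, hABne, ?_⟩
      · show A ∈ Finset.filter (fun C => kerInf I0 C = v) S
        rw [hfibeq]; exact Finset.mem_insert_self _ _
      · show B ∈ Finset.filter (fun C => kerInf I0 C = v) S
        rw [hfibeq]; exact Finset.mem_insert_of_mem (Finset.mem_singleton_self _)
      · exact (key2 A hAf.1 B hBf.1 hABne).mp (by rw [hAf.2, hBf.2])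
    · intro v1 hv1 v2 hv2 heq
      rw [Finset.mem_filter] at hv1
      have hpos : 0 < (S.filter fun A => kerInf I0 A = v1).card := by omega
      obtain ⟨A, hA⟩ := Finset.card_pos.mp hpos
      have heq' : Finset.filter (fun A => kerInf I0 A = v1) S
          = Finset.filter (fun A => kerInf I0 A = v2) S := heq
      have hA2 := hA
      rw [heq'] at hA2
      rw [Finset.mem_filter] at hA hA2
      rw [← hA.2, hA2.2]
    · intro p hp
      rw [Finset.mem_filter, Finset.mem_powersetCard] at hp
      obtain ⟨⟨hpS, hp2⟩, A, hAp, B, hBp, hABne, hcirc⟩ := hp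
      have hA : A ∈ S := hpS hAp
      have hB : B ∈ S := hpS hBp
      have heq : kerInf I0 A = kerInf I0 B := (key2 A hA B hB hABne).mpr hcirc
      have hpAB : ({A, B} : Finset (Finset (Fin n))) = p := by
        refine Finset.eq_of_subset_of_card_le ?_ ?_
        · intro x hx
          rcases Finset.mem_insert.mp hx with h | h
          · exact h ▸ hAp
          · exact (Finset.mem_singleton.mp h) ▸ hBp
        · rw [hp2, Finset.card_pair hABne]
      have hBpart : B = partner I0 A := key1 A hA B hB hABne heq
      have hfibp : (S.filter fun C => kerInf I0 C = kerInf I0 A) = p := by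
        apply Finset.Subset.antisymm
        · intro C hC
          rw [Finset.mem_filter] at hC
          by_cases hCA : C = A
          · exact hCA ▸ hAp
          · have : C = partner I0 A := key1 A hA C hC.1 (Ne.symm hCA) hC.2.symm
            rw [this, ← hBpart]; exact hBp
        · intro x hx
          rw [← hpAB] at hx
          rcases Finset.mem_insert.mp hx with h | h
          · subst h; exact Finset.mem_filter.mpr ⟨hA, rfl⟩
          · rw [Finset.mem_singleton.mp h]
            exact Finset.mem_filter.mpr ⟨hB, heq.symm⟩
      refine ⟨kerInf I0 A, ?_, hfibp⟩
      rw [Finset.mem_filter]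
      exact ⟨Finset.mem_image_of_mem _ hA, by rw [hfibp, hp2]⟩
  have hScard : S.card = m := by
    rw [hS, Finset.card_image_of_injective _ hinj, Finset.card_univ, Fintype.card_fin]
  rw [himg]
  omega
end

section
/- Let G = (N, E) be a finite simple graph on N = [n], let e = {i, j} ∈ E, and let G/e be the simple graph obtained by contracting e, with vertex set N' = N ∖ {j} and the contracted vertex labeled i. Set X_e := ⋂ {H_B ∈ 𝒜_G : |B ∩ {i,j}| ≠ 1}. Then the linear embedding φ : (ℚ^{|N'|})^* → (ℚ^{|N|})^* given by φ(x_k) = x_k for k ≠ i and φ(x_i) = x_i + x_j maps the set of hyperplanes of 𝒜_{G/e} bijectively onto the localization (𝒜_G)_{X_e} = {H ∈ 𝒜_G : X_e ⊆ H} (where φ sends a hyperplane ker α to ker of the extension of φ(α) to ℚ^{|N|}). -/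
open Finset

/-- The linear form `∑_{i ∈ I} x_i` on `ℚ^V` for a general finite vertex type `V`. -/
noncomputable def linFormV {V : Type*} [Fintype V] (I : Finset V) : (V → ℚ) →ₗ[ℚ] ℚ :=
  ∑ i ∈ I, LinearMap.proj i

/-- The connected subgraph arrangement of a graph on a general finite vertex type. -/
def csaV {V : Type*} [Fintype V] (G : SimpleGraph V) : Set (Submodule ℚ (V → ℚ)) :=
  {H | ∃ I : Finset V, I.Nonempty ∧ (G.induce (↑I : Set V)).Connected ∧
    H = LinearMap.ker (linFormV I)}

/-- The contraction `G/e` of the edge `e = {i,j}`: the simple graph on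
`N' = N ∖ {j}` in which the contracted vertex is labeled `i`, each edge to `i` or `j`
becomes an edge to `i`, and loops and multiple edges are removed. -/
def contractEdge {n : ℕ} (G : SimpleGraph (Fin n)) (i j : Fin n) :
    SimpleGraph {v : Fin n // v ≠ j} :=
  SimpleGraph.fromRel fun a b =>
    G.Adj a b ∨ ((a : Fin n) = i ∧ G.Adj j b) ∨ ((b : Fin n) = i ∧ G.Adj a j)

/-- The linear map `ρ : ℚ^N → ℚ^{N'}` whose dual map is the linear embedding
`φ : (ℚ^{|N'|})^* → (ℚ^{|N|})^*`, `φ(x_k) = x_k` for `k ≠ i` and `φ(x_i) = x_i + x_j`. -/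
noncomputable def contractMap {n : ℕ} (i j : Fin n) :
    (Fin n → ℚ) →ₗ[ℚ] ({v : Fin n // v ≠ j} → ℚ) :=
  LinearMap.pi fun v =>
    if (v : Fin n) = i
    then ((LinearMap.proj i : (Fin n → ℚ) →ₗ[ℚ] ℚ) +
      (LinearMap.proj j : (Fin n → ℚ) →ₗ[ℚ] ℚ))
    else (LinearMap.proj (v : Fin n) : (Fin n → ℚ) →ₗ[ℚ] ℚ)

/-- The lattice element `X_e = ⋂ {H_B ∈ 𝒜_G : |B ∩ {i,j}| ≠ 1}`. -/
noncomputable def contractXe {n : ℕ} (G : SimpleGraph (Fin n)) (i j : Fin n) :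
    Submodule ℚ (Fin n → ℚ) :=
  ⨅ B ∈ {B : Finset (Fin n) | ConnSet G B ∧ (B ∩ {i, j}).card ≠ 1},
    LinearMap.ker (linForm B)


section ContractionAux

open SimpleGraph

variable {n : ℕ}

private lemma reach_lift {α β : Type*} {G : SimpleGraph α} {H : SimpleGraph β} (f : α → β)
    (h : ∀ a b, G.Adj a b → H.Reachable (f a) (f b)) {u v : α}
    (hr : G.Reachable u v) : H.Reachable (f u) (f v) := by
  obtain ⟨w⟩ := hr
  induction w with
  | nil => exact .refl _
  | cons had _ ih => exact (h _ _ had).trans ih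

private def liftSet (i j : Fin n) (hne : i ≠ j) (J : Finset {v : Fin n // v ≠ j}) :
    Finset (Fin n) :=
  if (⟨i, hne⟩ : {v : Fin n // v ≠ j}) ∈ J then insert j (J.image Subtype.val)
  else J.image Subtype.val

private lemma mem_liftSet {i j : Fin n} {hne : i ≠ j} {J : Finset {v : Fin n // v ≠ j}}
    {v : Fin n} :
    v ∈ liftSet i j hne J ↔ (v = j ∧ (⟨i, hne⟩ : {v : Fin n // v ≠ j}) ∈ J) ∨
      ∃ h : v ≠ j, (⟨v, h⟩ : {v : Fin n // v ≠ j}) ∈ J := by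
  unfold liftSet
  have himg : v ∈ J.image Subtype.val ↔
      ∃ h : v ≠ j, (⟨v, h⟩ : {v : Fin n // v ≠ j}) ∈ J := by
    simp only [Finset.mem_image]
    constructor
    · rintro ⟨a, ha, rfl⟩
      exact ⟨a.2, by rwa [Subtype.coe_eta]⟩
    · rintro ⟨h, hm⟩
      exact ⟨⟨v, h⟩, hm, rfl⟩
  split
  case isTrue hi =>
    simp only [Finset.mem_insert, himg]
    constructor
    · rintro (rfl | h)
      · exact Or.inl ⟨rfl, hi⟩
      · exact Or.inr h
    · rintro (⟨rfl, _⟩ | h)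
      · exact Or.inl rfl
      · exact Or.inr h
  case isFalse hi =>
    rw [himg]
    constructor
    · exact Or.inr
    · rintro (⟨rfl, hm⟩ | h)
      · exact absurd hm hi
      · exact h

private lemma contractMap_apply (i j : Fin n) (x : Fin n → ℚ) (v : {v : Fin n // v ≠ j}) :
    contractMap i j x v = if (v : Fin n) = i then x i + x j else x (v : Fin n) := by
  rw [contractMap, LinearMap.pi_apply]
  split <;> simp_all [LinearMap.proj]

private lemma linFormV_comp_contractMap (i j : Fin n) (hne : i ≠ j)
    (J : Finset {v : Fin n // v ≠ j}) :
    (linFormV J).comp (contractMap i j) = linForm (liftSet i j hne J) := by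
  apply LinearMap.ext; intro x
  have h1 : (linFormV J).comp (contractMap i j) x
      = ∑ v ∈ J, (if (v : Fin n) = i then x i + x j else x (v : Fin n)) := by
    simp [linFormV, LinearMap.sum_apply, contractMap_apply, LinearMap.proj]
  have h2 : ∀ v : {v : Fin n // v ≠ j},
      (if (v : Fin n) = i then x i + x j else x (v : Fin n))
        = x (v : Fin n) + (if v = (⟨i, hne⟩ : {v : Fin n // v ≠ j}) then x j else 0) := by
    intro v
    by_cases h : (v : Fin n) = i
    · rw [if_pos h, if_pos (Subtype.ext h), h]
    · rw [if_neg h, if_neg (fun hh => h (congrArg Subtype.val hh)), add_zero]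
  have h3 : ∑ v ∈ J, x (v : Fin n) = ∑ u ∈ J.image Subtype.val, x u :=
    (Finset.sum_image (fun a _ b _ h => Subtype.val_injective h)).symm
  rw [h1]
  simp only [h2, Finset.sum_add_distrib, Finset.sum_ite_eq' J, h3]
  have h4 : linForm (liftSet i j hne J) x = ∑ u ∈ liftSet i j hne J, x u := by
    simp [linForm, LinearMap.sum_apply, LinearMap.proj]
  rw [h4]
  unfold liftSet
  split
  case isTrue hi =>
    rw [Finset.sum_insert (by simp)]
    exact add_comm _ _
  case isFalse hi =>
    rw [add_zero]

private lemma card_inter_pair_ne_one {B : Finset (Fin n)} {i j : Fin n} (hne : i ≠ j) :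
    (B ∩ {i, j}).card ≠ 1 ↔ (i ∈ B ↔ j ∈ B) := by
  rw [Finset.inter_comm]
  by_cases hi : i ∈ B <;> by_cases hj : j ∈ B
  · rw [Finset.insert_inter_of_mem hi, Finset.singleton_inter_of_mem hj]
    simp [hne, hi, hj]
  · rw [Finset.insert_inter_of_mem hi, Finset.singleton_inter_of_notMem hj]
    simp [hi, hj]
  · rw [Finset.insert_inter_of_notMem hi, Finset.singleton_inter_of_mem hj]
    simp [hi, hj]
  · rw [Finset.insert_inter_of_notMem hi, Finset.singleton_inter_of_notMem hj]
    simp [hi, hj]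

private lemma linForm_single (B : Finset (Fin n)) (k : Fin n) :
    linForm B (Pi.single k 1) = if k ∈ B then (1 : ℚ) else 0 := by
  simp [linForm, LinearMap.sum_apply, LinearMap.proj, Pi.single_apply,
    Finset.sum_ite_eq' B k]

private lemma x0_mem (G : SimpleGraph (Fin n)) {i j : Fin n} (hne : i ≠ j) :
    (Pi.single i 1 - Pi.single j 1 : Fin n → ℚ) ∈ contractXe G i j := by
  rw [contractXe]
  simp only [Submodule.mem_iInf]
  intro B hB
  obtain ⟨-, hcard⟩ := hB
  have hijB := (card_inter_pair_ne_one hne).mp hcard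
  rw [LinearMap.mem_ker, map_sub, linForm_single, linForm_single]
  by_cases hi : i ∈ B
  · rw [if_pos hi, if_pos (hijB.mp hi), sub_self]
  · rw [if_neg hi, if_neg (fun hj => hi (hijB.mpr hj)), sub_self]

private lemma liftSet_subtype (i j : Fin n) (hne : i ≠ j) (B : Finset (Fin n))
    (h : i ∈ B ↔ j ∈ B) : liftSet i j hne (B.subtype (· ≠ j)) = B := by
  ext v
  rw [mem_liftSet]
  by_cases hv : v = j
  · subst hv
    simp only [Finset.mem_subtype]
    constructor
    · rintro (⟨-, hm⟩ | ⟨hh, -⟩)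
      · exact h.mp hm
      · exact absurd rfl hh
    · intro hj
      exact Or.inl ⟨by trivial, h.mpr hj⟩
  · simp [Finset.mem_subtype, hv]

private lemma contractMap_surjective (i j : Fin n) (hne : i ≠ j) :
    Function.Surjective (contractMap i j) := by
  intro y
  refine ⟨fun v => if h : v = j then 0 else y ⟨v, h⟩, ?_⟩
  funext v
  rw [contractMap_apply]
  rcases v with ⟨v, hv⟩
  by_cases hvi : v = i
  · subst hvi
    simp [hv, hne, Ne.symm hne]
  · simp [hvi, hv]

private lemma induce_adj_of {α : Type*} {G : SimpleGraph α} {s : Set α} {u v : ↥s}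
    (h : G.Adj ↑u ↑v) : (G.induce s).Adj u v := h

private lemma contractEdge_adj' {G : SimpleGraph (Fin n)} {i j : Fin n}
    {a b : {v : Fin n // v ≠ j}} (hab : (a : Fin n) ≠ (b : Fin n))
    (h : G.Adj (a : Fin n) b ∨ ((a : Fin n) = i ∧ G.Adj j b) ∨
      ((b : Fin n) = i ∧ G.Adj (a : Fin n) j)) :
    (contractEdge G i j).Adj a b := by
  rw [contractEdge, SimpleGraph.fromRel_adj]
  exact ⟨fun hh => hab (congrArg Subtype.val hh), Or.inl h⟩

private lemma liftSet_connected (G : SimpleGraph (Fin n)) {i j : Fin n} (hij : G.Adj i j)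
    (J : Finset {v : Fin n // v ≠ j}) (hJne : J.Nonempty)
    (hc : ((contractEdge G i j).induce (↑J : Set {v : Fin n // v ≠ j})).Connected) :
    (G.induce (↑(liftSet i j hij.ne J) : Set (Fin n))).Connected := by
  classical
  have hne : i ≠ j := hij.ne
  have hmemL : ∀ v : {v : Fin n // v ≠ j}, v ∈ J → (v : Fin n) ∈ liftSet i j hne J :=
    fun v hv => mem_liftSet.mpr (Or.inr ⟨v.2, by rwa [Subtype.coe_eta]⟩)
  set L : Set (Fin n) := (↑(liftSet i j hne J) : Set (Fin n)) with hLdef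
  set JS : Set {v : Fin n // v ≠ j} := (↑J : Set {v : Fin n // v ≠ j}) with hJSdef
  have hmemJS : ∀ w : JS, (↑w : {v : Fin n // v ≠ j}) ∈ J := fun w => Finset.mem_coe.mp w.2
  let g : JS → L := fun v => ⟨((v : {v : Fin n // v ≠ j}) : Fin n),
    Finset.mem_coe.mpr (hmemL _ (hmemJS v))⟩
  have key2 : ∀ a b : JS,
      (G.Adj (↑↑a : Fin n) ↑↑b ∨ ((↑↑a : Fin n) = i ∧ G.Adj j ↑↑b) ∨
        ((↑↑b : Fin n) = i ∧ G.Adj (↑↑a : Fin n) j)) →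
      (G.induce L).Reachable (g a) (g b) := by
    intro a b h
    rcases h with h | ⟨ha, hb⟩ | ⟨hb, ha⟩
    · exact (induce_adj_of (s := L) (u := g a) (v := g b) h).reachable
    · have hiJ : (⟨i, hne⟩ : {v : Fin n // v ≠ j}) ∈ J := by
        have h2 : (↑a : {v : Fin n // v ≠ j}) = ⟨i, hne⟩ := Subtype.ext ha
        rw [← h2]; exact hmemJS a
      have hjL : j ∈ L := Finset.mem_coe.mpr (mem_liftSet.mpr (Or.inl ⟨rfl, hiJ⟩))
      have e1 : (G.induce L).Adj (g a) ⟨j, hjL⟩ := induce_adj_of (by rw [show ((g a : Fin n)) = i from ha]; exact hij)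
      have e2 : (G.induce L).Adj ⟨j, hjL⟩ (g b) := induce_adj_of hb
      exact e1.reachable.trans e2.reachable
    · have hiJ : (⟨i, hne⟩ : {v : Fin n // v ≠ j}) ∈ J := by
        have h2 : (↑b : {v : Fin n // v ≠ j}) = ⟨i, hne⟩ := Subtype.ext hb
        rw [← h2]; exact hmemJS b
      have hjL : j ∈ L := Finset.mem_coe.mpr (mem_liftSet.mpr (Or.inl ⟨rfl, hiJ⟩))
      have e1 : (G.induce L).Adj (g a) ⟨j, hjL⟩ := induce_adj_of ha
      have e2 : (G.induce L).Adj ⟨j, hjL⟩ (g b) := induce_adj_of (by rw [show ((g b : Fin n)) = i from hb]; exact hij.symm)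
      exact e1.reachable.trans e2.reachable
  have key : ∀ a b : JS, ((contractEdge G i j).induce JS).Adj a b →
      (G.induce L).Reachable (g a) (g b) := by
    intro a b hab
    have hab' : (contractEdge G i j).Adj ↑a ↑b := hab
    rw [contractEdge, SimpleGraph.fromRel_adj] at hab'
    rcases hab'.2 with h | h
    · exact key2 a b h
    · exact (key2 b a h).symm
  rw [SimpleGraph.connected_iff]
  constructor
  · intro u v
    have hstep : ∀ u : L, ∃ w : JS, (G.induce L).Reachable u (g w) := by
      rintro ⟨v, hv⟩
      have hv' : v ∈ liftSet i j hne J := Finset.mem_coe.mp hv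
      by_cases h : v = j
      · have hiJ : (⟨i, hne⟩ : {v : Fin n // v ≠ j}) ∈ J := by
          rcases mem_liftSet.mp hv' with ⟨-, hm⟩ | ⟨hh, hm2⟩
          · exact hm
          · exact absurd h hh
        refine ⟨⟨⟨i, hne⟩, Finset.mem_coe.mpr hiJ⟩, ?_⟩
        refine (induce_adj_of (s := L) (u := ⟨v, hv⟩)
          (v := g ⟨⟨i, hne⟩, Finset.mem_coe.mpr hiJ⟩) ?_).reachable
        show G.Adj v i
        rw [h]
        exact hij.symm
      · have hm : (⟨v, h⟩ : {v : Fin n // v ≠ j}) ∈ J := by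
          rcases mem_liftSet.mp hv' with ⟨h2, -⟩ | ⟨h2, hm⟩
          · exact absurd h2 h
          · exact hm
        refine ⟨⟨⟨v, h⟩, Finset.mem_coe.mpr hm⟩, ?_⟩
        have h3 : g ⟨⟨v, h⟩, Finset.mem_coe.mpr hm⟩ = ⟨v, hv⟩ := Subtype.ext rfl
        rw [h3]
    obtain ⟨wu, hu⟩ := hstep u
    obtain ⟨wv, hv⟩ := hstep v
    exact hu.trans ((reach_lift g key (hc.preconnected wu wv)).trans hv.symm)
  · obtain ⟨w, hw⟩ := hJne
    exact ⟨⟨(w : Fin n), Finset.mem_coe.mpr (hmemL w hw)⟩⟩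

private def downMap (i j : Fin n) (hne : i ≠ j) (B : Finset (Fin n))
    (hibjb : i ∈ B ↔ j ∈ B) (v : (↑B : Set (Fin n))) :
    (↑(B.subtype (· ≠ j)) : Set {v : Fin n // v ≠ j}) :=
  if h : (↑v : Fin n) = j
  then ⟨⟨i, hne⟩, Finset.mem_coe.mpr (Finset.mem_subtype.mpr
    (hibjb.mpr (h ▸ Finset.mem_coe.mp v.2)))⟩
  else ⟨⟨↑v, h⟩, Finset.mem_coe.mpr (Finset.mem_subtype.mpr (Finset.mem_coe.mp v.2))⟩

private lemma downMap_val (i j : Fin n) (hne : i ≠ j) (B : Finset (Fin n))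
    (hibjb : i ∈ B ↔ j ∈ B) (v : (↑B : Set (Fin n))) :
    ((downMap i j hne B hibjb v : {v : Fin n // v ≠ j}) : Fin n)
      = if (↑v : Fin n) = j then i else ↑v := by
  unfold downMap
  split <;> simp_all

private lemma downSet_connected (G : SimpleGraph (Fin n)) {i j : Fin n} (hij : G.Adj i j)
    (B : Finset (Fin n)) (hBcon : (G.induce (↑B : Set (Fin n))).Connected)
    (hibjb : i ∈ B ↔ j ∈ B) :
    ((contractEdge G i j).induce
      (↑(B.subtype (· ≠ j)) : Set {v : Fin n // v ≠ j})).Connected := by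
  classical
  have hne : i ≠ j := hij.ne
  set DS : Set {v : Fin n // v ≠ j} := (↑(B.subtype (· ≠ j)) : Set {v : Fin n // v ≠ j})
    with hDSdef
  let g := downMap i j hne B hibjb
  have key : ∀ a b : (↑B : Set (Fin n)), (G.induce (↑B : Set (Fin n))).Adj a b →
      ((contractEdge G i j).induce DS).Reachable (g a) (g b) := by
    intro a b hab'
    have hab : G.Adj ↑a ↑b := hab'
    by_cases haj : (↑a : Fin n) = j <;> by_cases hbj : (↑b : Fin n) = j
    · exact absurd hab (by rw [haj, hbj]; exact G.irrefl)
    · by_cases hbi : (↑b : Fin n) = i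
      · have h3 : g a = g b := Subtype.ext (Subtype.ext (by
          rw [show g a = downMap i j hne B hibjb a from rfl,
            show g b = downMap i j hne B hibjb b from rfl,
            downMap_val, downMap_val, if_pos haj, if_neg hbj, hbi]))
        rw [h3]
      · refine (induce_adj_of (contractEdge_adj' ?_ ?_)).reachable
        · rw [downMap_val, downMap_val, if_pos haj, if_neg hbj]
          exact fun h => hbi h.symm
        · right; left
          constructor
          · rw [downMap_val, if_pos haj]
          · rw [downMap_val, if_neg hbj]
            exact haj ▸ hab
    · by_cases hai : (↑a : Fin n) = i
      · have h3 : g a = g b := Subtype.ext (Subtype.ext (by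
          rw [show g a = downMap i j hne B hibjb a from rfl,
            show g b = downMap i j hne B hibjb b from rfl,
            downMap_val, downMap_val, if_neg haj, if_pos hbj, hai]))
        rw [h3]
      · refine (induce_adj_of (contractEdge_adj' ?_ ?_)).reachable
        · rw [downMap_val, downMap_val, if_neg haj, if_pos hbj]
          exact hai
        · right; right
          constructor
          · rw [downMap_val, if_pos hbj]
          · rw [downMap_val, if_neg haj]
            exact hbj ▸ hab
    · refine (induce_adj_of (contractEdge_adj' ?_ ?_)).reachable
      · rw [downMap_val, downMap_val, if_neg haj, if_neg hbj]
        exact hab.ne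
      · left
        rw [show (((g a : {v : Fin n // v ≠ j})) : Fin n) = ↑a from by
            rw [downMap_val, if_neg haj],
          show (((g b : {v : Fin n // v ≠ j})) : Fin n) = ↑b from by
            rw [downMap_val, if_neg hbj]]
        exact hab
  rw [SimpleGraph.connected_iff]
  constructor
  · intro u v
    have hmemB : ∀ w : DS, ((w : {v : Fin n // v ≠ j}) : Fin n) ∈ B :=
      fun w => Finset.mem_subtype.mp (Finset.mem_coe.mp w.2)
    let u0 : (↑B : Set (Fin n)) := ⟨↑↑u, Finset.mem_coe.mpr (hmemB u)⟩
    let v0 : (↑B : Set (Fin n)) := ⟨↑↑v, Finset.mem_coe.mpr (hmemB v)⟩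
    have hgu : g u0 = u := Subtype.ext (Subtype.ext (by
      rw [show g u0 = downMap i j hne B hibjb u0 from rfl, downMap_val,
        if_neg (show (↑u0 : Fin n) ≠ j from (u : {v : Fin n // v ≠ j}).2)]))
    have hgv : g v0 = v := Subtype.ext (Subtype.ext (by
      rw [show g v0 = downMap i j hne B hibjb v0 from rfl, downMap_val,
        if_neg (show (↑v0 : Fin n) ≠ j from (v : {v : Fin n // v ≠ j}).2)]))
    have := reach_lift g key (hBcon.preconnected u0 v0)
    rwa [hgu, hgv] at this
  · obtain ⟨w⟩ := hBcon.nonempty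
    exact ⟨g w⟩

end ContractionAux

/-- Let `e = {i,j}` be an edge of `G` and `G/e` the contracted
graph. The linear embedding `φ = (contractMap i j).dualMap`, `φ(x_k) = x_k` for
`k ≠ i`, `φ(x_i) = x_i + x_j`, maps the hyperplanes of `𝒜_{G/e}` bijectively onto the
localization `(𝒜_G)_{X_e}`; on hyperplanes, `ker α ↦ ker (φ α)` is exactly
`H ↦ Submodule.comap (contractMap i j) H`. -/
theorem csa_contraction_localization {n : ℕ} (G : SimpleGraph (Fin n)) (i j : Fin n)
    (hij : G.Adj i j) :
    Function.Injective (contractMap i j).dualMap ∧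
      Set.BijOn (fun H => Submodule.comap (contractMap i j) H)
        (csaV (contractEdge G i j)) {H | H ∈ csa G ∧ contractXe G i j ≤ H} := by
  classical
  have hne : i ≠ j := hij.ne
  have hsurj := contractMap_surjective i j hne
  have hinj : Function.Injective (contractMap i j).dualMap := by
    intro f g hfg
    refine LinearMap.ext fun y => ?_
    obtain ⟨x, rfl⟩ := hsurj y
    exact LinearMap.congr_fun hfg x
  refine ⟨hinj, ?_, ?_, ?_⟩
  · -- MapsTo
    rintro H ⟨J, hJne, hJcon, rfl⟩
    have hker : Submodule.comap (contractMap i j) (LinearMap.ker (linFormV J))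
        = LinearMap.ker (linForm (liftSet i j hne J)) := by
      rw [← linFormV_comp_contractMap i j hne J, LinearMap.ker_comp]
    have hLne : (liftSet i j hne J).Nonempty := by
      obtain ⟨w, hw⟩ := hJne
      exact ⟨(w : Fin n), mem_liftSet.mpr (Or.inr ⟨w.2, by rwa [Subtype.coe_eta]⟩)⟩
    have hLconn := liftSet_connected G hij J hJne hJcon
    have hcardne : ((liftSet i j hne J) ∩ {i, j}).card ≠ 1 := by
      refine (card_inter_pair_ne_one hne).mpr ?_
      constructor
      · intro hi
        rcases mem_liftSet.mp hi with ⟨hij', -⟩ | ⟨h2, hm⟩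
        · exact absurd hij' hne
        · exact mem_liftSet.mpr (Or.inl ⟨rfl, hm⟩)
      · intro hj
        rcases mem_liftSet.mp hj with ⟨-, hm⟩ | ⟨hh, -⟩
        · exact mem_liftSet.mpr (Or.inr ⟨hne, hm⟩)
        · exact absurd rfl hh
    refine ⟨⟨liftSet i j hne J, ⟨hLne, hLconn⟩, hker⟩, ?_⟩
    have hle' : contractXe G i j ≤ LinearMap.ker (linForm (liftSet i j hne J)) := by
      simp only [contractXe]
      exact iInf₂_le _ ⟨⟨hLne, hLconn⟩, hcardne⟩
    show contractXe G i j ≤ Submodule.comap (contractMap i j) (LinearMap.ker (linFormV J))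
    rw [hker]
    exact hle'
  · -- InjOn
    intro A _ B _ h
    have h2 := congrArg (Submodule.map (contractMap i j)) h
    rwa [Submodule.map_comap_eq_of_surjective hsurj,
      Submodule.map_comap_eq_of_surjective hsurj] at h2
  · -- SurjOn
    rintro H ⟨⟨B, ⟨hBne, hBcon⟩, rfl⟩, hle⟩
    have hx0 := hle (x0_mem G hne)
    rw [LinearMap.mem_ker, map_sub, linForm_single, linForm_single] at hx0
    have hibjb : i ∈ B ↔ j ∈ B := by
      by_cases hi : i ∈ B <;> by_cases hj : j ∈ B <;> simp_all
    have hDne : (B.subtype (· ≠ j)).Nonempty := by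
      obtain ⟨w, hw⟩ := hBne
      by_cases hwj : w = j
      · exact ⟨⟨i, hne⟩, Finset.mem_subtype.mpr (hibjb.mpr (hwj ▸ hw))⟩
      · exact ⟨⟨w, hwj⟩, Finset.mem_subtype.mpr hw⟩
    refine ⟨LinearMap.ker (linFormV (B.subtype (· ≠ j))),
      ⟨B.subtype (· ≠ j), hDne, downSet_connected G hij B hBcon hibjb, rfl⟩, ?_⟩
    show Submodule.comap (contractMap i j) _ = _
    rw [← LinearMap.ker_comp, linFormV_comp_contractMap i j hne,
      liftSet_subtype i j hne B hibjb]
end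

section
/- Let 1 < k < n. The linear map ψ of (ℚ^{n+1})^* defined by ψ(x_i) = −x_{k−i} for i < k, ψ(x_k) = ∑_{j=1}^{n+1} x_j, ψ(x_i) = −x_{n+1−(i−k)} for k < i ≤ n, and ψ(x_{n+1}) = −x_{n+1}, is a linear automorphism of (ℚ^{n+1})^* that induces a bijection (via H = ker α ↦ ker ψ(α)) of the set of hyperplanes of the connected subgraph arrangement 𝒜_{A_{n,k}} onto itself, and it maps the hyperplane ker(∑_{j=1}^{n+1} x_j) to the hyperplane ker(x_k). -/
/-!
Write `c` for the vertex `k` and `σ` for the permutation of the vertices that fixes `c` and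
`n+1` and reverses each of the two path branches `1, …, k-1` and `k+1, …, n`. Then
`ψ(x_i) = -x_{σ i}` for `i ≠ c` and `ψ(x_c) = ∑_j x_j`, so `ψ` is an involution and
`ψ(∑_{i∈I} x_i) = ±∑_{j∈J} x_j`, where `J = σ(I)` if `c ∉ I` and `J = {c} ∪ σ(I)ᶜ`
if `c ∈ I`.

The connected vertex sets of `A_{n,k}` are the intervals of the path, the intervals of the
path through `c` together with `n+1`, and `{n+1}`. The map `I ↦ J` sends intervals avoiding
`c` to intervals avoiding `c`, exchanges the intervals through `c` with the sets of the second
kind, and fixes `{n+1}`; hence `ψ` permutes the hyperplanes of `𝒜_{A_{n,k}}`.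
-/

open Finset

/-- The linear map `T : ℚ^{n+1} → ℚ^{n+1}` whose dual map is the linear map `ψ` of
`(ℚ^{n+1})^*` given (in the paper's 1-based indexing) by `ψ(x_i) = −x_{k−i}` for
`i < k`, `ψ(x_k) = ∑_{j=1}^{n+1} x_j`, `ψ(x_i) = −x_{n+1−(i−k)}` for `k < i ≤ n`, and
`ψ(x_{n+1}) = −x_{n+1}`. -/
noncomputable def psiT (n k : ℕ) (h1 : 1 < k) (h2 : k < n) :
    (Fin (n + 1) → ℚ) →ₗ[ℚ] (Fin (n + 1) → ℚ) :=
  LinearMap.pi fun a : Fin (n + 1) =>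
    if h : a.val + 1 < k then
      -(LinearMap.proj (⟨k - a.val - 2, by omega⟩ : Fin (n + 1)) :
        (Fin (n + 1) → ℚ) →ₗ[ℚ] ℚ)
    else if h' : a.val + 1 = k then
      ∑ j : Fin (n + 1), (LinearMap.proj j : (Fin (n + 1) → ℚ) →ₗ[ℚ] ℚ)
    else if h'' : a.val < n then
      -(LinearMap.proj (⟨n + k - a.val - 1, by omega⟩ : Fin (n + 1)) :
        (Fin (n + 1) → ℚ) →ₗ[ℚ] ℚ)
    else
      -(LinearMap.proj (Fin.last n) : (Fin (n + 1) → ℚ) →ₗ[ℚ] ℚ)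

namespace SimpleGraph

variable {V : Type*} {G : SimpleGraph V}

lemma induce_singleton_connected (v : V) : (G.induce {v}).Connected := by
  rw [induce_singleton_eq_top]
  exact connected_top

lemma exists_boundary_adj_of_induce_preconnected {s : Set V} (hs : (G.induce s).Preconnected)
    {u v : V} (hu : u ∈ s) (hv : v ∈ s) {p : V → Prop} (hpu : p u) (hpv : ¬p v) :
    ∃ x ∈ s, ∃ y ∈ s, G.Adj x y ∧ p x ∧ ¬p y := by
  obtain ⟨W⟩ := hs ⟨u, hu⟩ ⟨v, hv⟩
  obtain ⟨d, -, hd₁, hd₂⟩ := W.exists_boundary_dart {w | p w} hpu hpv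
  exact ⟨d.fst, d.fst.2, d.snd, d.snd.2, d.adj, hd₁, hd₂⟩

end SimpleGraph

namespace AlmostPath

variable {n k : ℕ}

/-- The paper's vertex `k`, the `c` above; vertices are numbered from `0`, so the paper's
pendant vertex `n+1` is `Fin.last n`. -/
def branchVertex (n k : ℕ) (hk : k ≤ n) : Fin (n + 1) := ⟨k - 1, by omega⟩

@[simp]
lemma branchVertex_val (hk : k ≤ n) : (branchVertex n k hk).val = k - 1 := rfl

/-- The permutation `σ` above. -/
def branchReflect (n k : ℕ) (hk : k ≤ n) (a : Fin (n + 1)) : Fin (n + 1) :=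
  if h : a.val < k - 1 then ⟨k - 2 - a.val, by omega⟩
  else if a.val = k - 1 ∨ a.val = n then a
  else ⟨n + k - 1 - a.val, by omega⟩

lemma branchReflect_val (hk : k ≤ n) (a : Fin (n + 1)) :
    (branchReflect n k hk a).val =
      if a.val < k - 1 then k - 2 - a.val
      else if a.val = k - 1 ∨ a.val = n then a.val
      else n + k - 1 - a.val := by
  unfold branchReflect
  split_ifs <;> rfl

lemma branchReflect_involutive (hk0 : 0 < k) (hk : k ≤ n) :
    Function.Involutive (branchReflect n k hk) := fun a => by
  have := a.isLt
  ext
  rw [branchReflect_val, branchReflect_val]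
  split_ifs <;> omega

lemma branchReflect_branchVertex (hk : k ≤ n) :
    branchReflect n k hk (branchVertex n k hk) = branchVertex n k hk := by
  ext
  simp [branchReflect_val, branchVertex]

lemma branchReflect_eq_branchVertex_iff (hk0 : 0 < k) (hk : k ≤ n) {a : Fin (n + 1)} :
    branchReflect n k hk a = branchVertex n k hk ↔ a = branchVertex n k hk := by
  rw [← (branchReflect_involutive hk0 hk).injective.eq_iff, branchReflect_involutive hk0 hk,
    branchReflect_branchVertex]

lemma mem_image_branchReflect (hk0 : 0 < k) (hk : k ≤ n) {I : Finset (Fin (n + 1))}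
    {a : Fin (n + 1)} : a ∈ I.image (branchReflect n k hk) ↔ branchReflect n k hk a ∈ I := by
  have hσ := branchReflect_involutive hk0 hk
  rw [mem_image]
  constructor
  · rintro ⟨b, hb, rfl⟩
    rwa [hσ]
  · exact fun ha => ⟨_, ha, hσ a⟩

lemma psiT_apply (h1 : 1 < k) (h2 : k < n) (x : Fin (n + 1) → ℚ) (a : Fin (n + 1)) :
    psiT n k h1 h2 x a =
      if a = branchVertex n k h2.le then ∑ j, x j else -x (branchReflect n k h2.le a) := by
  have := a.isLt
  simp only [psiT, LinearMap.pi_apply, Fin.ext_iff, branchVertex]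
  split_ifs <;> (try omega) <;>
    simp only [LinearMap.neg_apply, LinearMap.proj_apply, LinearMap.sum_apply, neg_inj] <;>
    refine congrArg x (Fin.ext ?_) <;> rw [branchReflect_val] <;> simp only [Fin.val_last] <;>
    split_ifs <;> omega

lemma linForm_apply (I : Finset (Fin n)) (x : Fin n → ℚ) : linForm I x = ∑ i ∈ I, x i := by
  simp [linForm]

/-- The set `J` above. -/
def psiSet (n k : ℕ) (hk : k ≤ n) (I : Finset (Fin (n + 1))) : Finset (Fin (n + 1)) :=
  if branchVertex n k hk ∈ I then insert (branchVertex n k hk) (I.image (branchReflect n k hk))ᶜ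
  else I.image (branchReflect n k hk)

lemma linForm_comp_psiT (h1 : 1 < k) (h2 : k < n) (I : Finset (Fin (n + 1))) :
    (linForm I).comp (psiT n k h1 h2) =
      if branchVertex n k h2.le ∈ I then linForm (psiSet n k h2.le I)
      else -linForm (psiSet n k h2.le I) := by
  set c := branchVertex n k h2.le
  set σ := branchReflect n k h2.le
  have hσ : Function.Involutive σ := branchReflect_involutive (by omega) h2.le
  have hσc : σ c = c := branchReflect_branchVertex h2.le
  refine LinearMap.ext fun x => ?_
  have hψ : ∀ i, psiT n k h1 h2 x i = (if i = c then ∑ j, x j + x c else 0) - x (σ i) := by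
    intro i
    rw [psiT_apply]
    split_ifs with h
    · rw [h, hσc]
      ring
    · ring
  have hsum : linForm I (psiT n k h1 h2 x) =
      (if c ∈ I then ∑ j, x j + x c else 0) - ∑ j ∈ I.image σ, x j := by
    simp_rw [linForm_apply, hψ, sum_sub_distrib, sum_ite_eq',
      sum_image hσ.injective.injOn]
  rw [LinearMap.comp_apply, hsum]
  unfold psiSet
  split_ifs with hc
  · have hc' : c ∉ (I.image σ)ᶜ := by
      rw [mem_compl, not_not]
      exact mem_image.mpr ⟨c, hc, hσc⟩
    rw [linForm_apply, sum_insert hc', ← sum_add_sum_compl (I.image σ) x]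
    ring
  · rw [LinearMap.neg_apply, linForm_apply]
    ring

lemma psiSet_univ (hk0 : 0 < k) (hk : k ≤ n) : psiSet n k hk univ = {branchVertex n k hk} := by
  rw [psiSet, if_pos (mem_univ _),
    image_univ_of_surjective (branchReflect_involutive hk0 hk).surjective, compl_univ,
    insert_empty]

lemma psiT_psiT (h1 : 1 < k) (h2 : k < n) (x : Fin (n + 1) → ℚ) :
    psiT n k h1 h2 (psiT n k h1 h2 x) = x := by
  funext a
  rw [psiT_apply]
  split_ifs with ha
  · calc ∑ j, psiT n k h1 h2 x j = linForm univ (psiT n k h1 h2 x) := (linForm_apply _ _).symm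
      _ = linForm (psiSet n k h2.le univ) x := by
        rw [← LinearMap.comp_apply, linForm_comp_psiT, if_pos (mem_univ _)]
      _ = x a := by rw [psiSet_univ (by omega), linForm_apply, sum_singleton, ha]
  · rw [psiT_apply, if_neg (mt (branchReflect_eq_branchVertex_iff (by omega) h2.le).mp ha),
      neg_neg, branchReflect_involutive (by omega)]

lemma bijective_dualMap_psiT (h1 : 1 < k) (h2 : k < n) :
    Function.Bijective (psiT n k h1 h2).dualMap :=
  Function.Involutive.bijective fun f => LinearMap.ext fun x => by simp [psiT_psiT]

lemma comap_psiT_comap_psiT (h1 : 1 < k) (h2 : k < n) (H : Submodule ℚ (Fin (n + 1) → ℚ)) :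
    (H.comap (psiT n k h1 h2)).comap (psiT n k h1 h2) = H := by
  ext x
  simp [psiT_psiT]

lemma comap_psiT_ker_linForm (h1 : 1 < k) (h2 : k < n) (I : Finset (Fin (n + 1))) :
    (LinearMap.ker (linForm I)).comap (psiT n k h1 h2) =
      LinearMap.ker (linForm (psiSet n k h2.le I)) := by
  rw [← LinearMap.ker_comp, linForm_comp_psiT]
  split_ifs
  · rfl
  · exact LinearMap.ker_neg _

lemma almostPath_adj_cases {u v : Fin (n + 1)} (h : (almostPath n k).Adj u v) :
    (u.val + 1 = v.val ∧ v.val < n) ∨ (v.val + 1 = u.val ∧ u.val < n) ∨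
      (u.val = k - 1 ∧ v.val = n) ∨ (v.val = k - 1 ∧ u.val = n) := by
  rw [almostPath, SimpleGraph.fromRel_adj] at h
  tauto

lemma almostPath_adj_succ {m : ℕ} (hm : m + 1 < n) :
    (almostPath n k).Adj ⟨m, by omega⟩ ⟨m + 1, by omega⟩ := by
  rw [almostPath, SimpleGraph.fromRel_adj]
  simp [Fin.ext_iff, hm]

lemma almostPath_adj_last (hk : k - 1 < n) :
    (almostPath n k).Adj ⟨k - 1, by omega⟩ (Fin.last n) := by
  rw [almostPath, SimpleGraph.fromRel_adj]
  simp [Fin.ext_iff]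
  omega

/-- Position on the path, the pendant vertex `n+1` being placed at its neighbour `k`: it changes
by at most one along every edge. -/
def pathProj (n k : ℕ) (v : Fin (n + 1)) : ℕ := if v.val = n then k - 1 else v.val

lemma exists_val_eq_of_pathProj_lt_le {s : Set (Fin (n + 1))}
    (hs : ((almostPath n k).induce s).Preconnected) {u v : Fin (n + 1)} (hu : u ∈ s)
    (hv : v ∈ s) {m : ℕ} (hum : pathProj n k u < m) (hmv : m ≤ pathProj n k v) :
    ∃ w ∈ s, w.val = m := by
  obtain ⟨x, -, y, hy, hxy, hx, hy'⟩ :=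
    SimpleGraph.exists_boundary_adj_of_induce_preconnected hs hu hv
      (p := fun w => pathProj n k w < m) hum (not_lt.mpr hmv)
  refine ⟨y, hy, ?_⟩
  have := almostPath_adj_cases hxy
  simp only [pathProj] at hx hy'
  split_ifs at hx hy' <;> omega

lemma exists_branch_mem_of_last_mem {s : Set (Fin (n + 1))}
    (hs : ((almostPath n k).induce s).Preconnected) (hlast : Fin.last n ∈ s) {u : Fin (n + 1)}
    (hu : u ∈ s) (hu' : u ≠ Fin.last n) : ∃ w ∈ s, w ≠ Fin.last n ∧ w.val = k - 1 := by
  obtain ⟨x, hx, y, -, hxy, hx', hy'⟩ :=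
    SimpleGraph.exists_boundary_adj_of_induce_preconnected hs hu hlast
      (p := (· ≠ Fin.last n)) hu' (not_not.mpr rfl)
  refine ⟨x, hx, hx', ?_⟩
  have := almostPath_adj_cases hxy
  rw [ne_eq, Fin.ext_iff, Fin.val_last] at hx'
  rw [not_not.mp hy', Fin.val_last] at this
  omega

def IsConnShape (n k : ℕ) (I : Finset (Fin (n + 1))) : Prop :=
  (∃ a b, a ≤ b ∧ b < n ∧ ∀ i : Fin (n + 1), i ∈ I ↔ a ≤ i.val ∧ i.val ≤ b) ∨
  (∃ a b, a ≤ k - 1 ∧ k - 1 ≤ b ∧ b < n ∧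
    ∀ i : Fin (n + 1), i ∈ I ↔ (a ≤ i.val ∧ i.val ≤ b) ∨ i.val = n) ∨
  (∀ i : Fin (n + 1), i ∈ I ↔ i.val = n)

lemma induce_pathSegment_connected {a b : ℕ} (hab : a ≤ b) (hb : b < n) :
    ((almostPath n k).induce {v | a ≤ v.val ∧ v.val ≤ b}).Connected := by
  induction b, hab using Nat.le_induction with
  | base =>
    have hseg : {v : Fin (n + 1) | a ≤ v.val ∧ v.val ≤ a} = {⟨a, by omega⟩} := by
      ext v
      simp [Fin.ext_iff]
      omega
    rw [hseg]
    exact SimpleGraph.induce_singleton_connected _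
  | succ b hab ih =>
    have hseg : {v : Fin (n + 1) | a ≤ v.val ∧ v.val ≤ b + 1} =
        {v | a ≤ v.val ∧ v.val ≤ b} ∪ {⟨b + 1, hb.trans (by omega)⟩} := by
      ext v
      simp [Fin.ext_iff]
      omega
    rw [hseg]
    exact SimpleGraph.connected_induce_union (ih (by omega)).preconnected
      (SimpleGraph.induce_singleton_connected _).preconnected
      (v := ⟨b, by omega⟩) (by simp [hab]) rfl (almostPath_adj_succ hb)

lemma connSet_of_isConnShape {I : Finset (Fin (n + 1))} (hI : IsConnShape n k I) :
    ConnSet (almostPath n k) I := by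
  suffices hconn : ((almostPath n k).induce (↑I : Set (Fin (n + 1)))).Connected by
    obtain ⟨⟨v, hv⟩⟩ := hconn.nonempty
    exact ⟨⟨v, hv⟩, hconn⟩
  rcases hI with ⟨a, b, hab, hb, hI⟩ | ⟨a, b, hak, hkb, hb, hI⟩ | hI
  · rw [show (↑I : Set (Fin (n + 1))) = {v | a ≤ v.val ∧ v.val ≤ b} from Set.ext hI]
    exact induce_pathSegment_connected hab hb
  · have hI' :
        (↑I : Set (Fin (n + 1))) = {v | a ≤ v.val ∧ v.val ≤ b} ∪ {Fin.last n} := by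
      ext v
      simp [hI, Fin.ext_iff, or_comm]
    rw [hI']
    exact SimpleGraph.connected_induce_union
      (induce_pathSegment_connected (hak.trans hkb) hb).preconnected
      (SimpleGraph.induce_singleton_connected _).preconnected
      (v := ⟨k - 1, by omega⟩) ⟨hak, hkb⟩ rfl (almostPath_adj_last (by omega))
  · rw [show (↑I : Set (Fin (n + 1))) = {Fin.last n} from
      Set.ext fun v => by simp [hI, Fin.ext_iff]]
    exact SimpleGraph.induce_singleton_connected _

lemma exists_interval_of_induce_preconnected {I : Finset (Fin (n + 1))}
    (hI : ((almostPath n k).induce (↑I : Set (Fin (n + 1)))).Preconnected)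
    (hJ : (I.erase (Fin.last n)).Nonempty) :
    ∃ a b, a ≤ b ∧ b < n ∧
      ∀ i : Fin (n + 1), i ∈ I.erase (Fin.last n) ↔ a ≤ i.val ∧ i.val ≤ b := by
  set J := I.erase (Fin.last n)
  have hlt : ∀ i ∈ J, i.val < n := fun i hi => Fin.val_lt_last (ne_of_mem_erase hi)
  have haJ := J.min'_mem hJ
  have hbJ := J.max'_mem hJ
  refine ⟨(J.min' hJ).val, (J.max' hJ).val, J.min'_le _ hbJ, hlt _ hbJ, fun i => ⟨fun hi =>
    ⟨J.min'_le i hi, J.le_max' i hi⟩, fun ⟨hai, hib⟩ => ?_⟩⟩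
  rcases hai.eq_or_lt with h | h
  · rwa [← Fin.ext h]
  obtain ⟨w, hw, hwi⟩ := exists_val_eq_of_pathProj_lt_le hI (mem_of_mem_erase haJ)
    (mem_of_mem_erase hbJ) (m := i.val)
    (by rwa [pathProj, if_neg (hlt _ haJ).ne]) (by rwa [pathProj, if_neg (hlt _ hbJ).ne])
  obtain rfl : w = i := Fin.ext hwi
  have hwn : w.val < n := hib.trans_lt (hlt _ hbJ)
  exact mem_erase.mpr ⟨fun h' => by simp [h'] at hwn, hw⟩

lemma isConnShape_of_connSet {I : Finset (Fin (n + 1))} (hI : ConnSet (almostPath n k) I) :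
    IsConnShape n k I := by
  obtain ⟨hne, hconn⟩ := hI
  rcases (I.erase (Fin.last n)).eq_empty_or_nonempty with hJ | hJ
  · obtain rfl : I = {Fin.last n} := (erase_eq_empty_iff _ _).mp hJ |>.resolve_left hne.ne_empty
    exact Or.inr (Or.inr fun i => by simp [Fin.ext_iff])
  obtain ⟨a, b, hab, hb, hJI⟩ := exists_interval_of_induce_preconnected hconn.preconnected hJ
  by_cases hlast : Fin.last n ∈ I
  · obtain ⟨u, hu⟩ := hJ
    obtain ⟨w, hw, hw', hwk⟩ := exists_branch_mem_of_last_mem hconn.preconnected hlast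
      (mem_of_mem_erase hu) (ne_of_mem_erase hu)
    have := (hJI w).mp (mem_erase.mpr ⟨hw', hw⟩)
    refine Or.inr (Or.inl ⟨a, b, by omega, by omega, hb, fun i => ?_⟩)
    rw [← hJI, mem_erase]
    by_cases hi : i = Fin.last n
    · simp [hi, hlast]
    · have hi' : i.val ≠ n := fun h => hi (Fin.ext h)
      simp [hi, hi']
  · rw [erase_eq_of_notMem hlast] at hJI
    exact Or.inl ⟨a, b, hab, hb, hJI⟩

lemma isConnShape_image_branchReflect (hk0 : 0 < k) (hk : k ≤ n) {I : Finset (Fin (n + 1))}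
    (hI : IsConnShape n k I) (hc : branchVertex n k hk ∉ I) :
    IsConnShape n k (I.image (branchReflect n k hk)) := by
  have hmem : ∀ j, j ∈ I.image (branchReflect n k hk) ↔ branchReflect n k hk j ∈ I :=
    fun j => mem_image_branchReflect hk0 hk
  rcases hI with ⟨a, b, hab, hb, hI⟩ | ⟨a, b, hak, hkb, hb, hI⟩ | hI
  · have : b < k - 1 ∨ k - 1 < a := by
      by_contra!
      exact hc ((hI _).mpr (by rw [branchVertex_val]; omega))
    rcases this with h | h
    · refine Or.inl ⟨k - 2 - b, k - 2 - a, by omega, by omega, fun j => ?_⟩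
      have := j.isLt
      rw [hmem, hI, branchReflect_val]
      split_ifs <;> omega
    · refine Or.inl ⟨n + k - 1 - b, n + k - 1 - a, by omega, by omega, fun j => ?_⟩
      have := j.isLt
      rw [hmem, hI, branchReflect_val]
      split_ifs <;> omega
  · exact absurd ((hI _).mpr (Or.inl ⟨hak, hkb⟩)) hc
  · refine Or.inr (Or.inr fun j => ?_)
    have := j.isLt
    rw [hmem, hI, branchReflect_val]
    split_ifs <;> omega

lemma isConnShape_insert_compl_image_branchReflect (hk0 : 0 < k) (hk : k ≤ n)
    {I : Finset (Fin (n + 1))} (hI : IsConnShape n k I) (hc : branchVertex n k hk ∈ I) :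
    IsConnShape n k (insert (branchVertex n k hk) (I.image (branchReflect n k hk))ᶜ) := by
  have hmem : ∀ j, j ∈ insert (branchVertex n k hk) (I.image (branchReflect n k hk))ᶜ ↔
      j.val = k - 1 ∨ branchReflect n k hk j ∉ I := fun j => by
    rw [mem_insert, mem_compl, mem_image_branchReflect hk0, branchVertex, Fin.ext_iff]
  rcases hI with ⟨a, b, hab, hb, hI⟩ | ⟨a, b, hak, hkb, hb, hI⟩ | hI
  · have := (hI _).mp hc
    rw [branchVertex_val] at this
    refine Or.inr (Or.inl ⟨k - 1 - a, n + k - 2 - b, by omega, by omega, by omega, fun j => ?_⟩)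
    have := j.isLt
    rw [hmem, hI, branchReflect_val]
    split_ifs <;> omega
  · refine Or.inl ⟨k - 1 - a, n + k - 2 - b, by omega, by omega, fun j => ?_⟩
    have := j.isLt
    rw [hmem, hI, branchReflect_val]
    split_ifs <;> omega
  · have := (hI _).mp hc
    rw [branchVertex_val] at this
    omega

lemma isConnShape_psiSet (hk0 : 0 < k) (hk : k ≤ n) {I : Finset (Fin (n + 1))}
    (hI : IsConnShape n k I) : IsConnShape n k (psiSet n k hk I) := by
  unfold psiSet
  split_ifs with hc
  · exact isConnShape_insert_compl_image_branchReflect hk0 hk hI hc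
  · exact isConnShape_image_branchReflect hk0 hk hI hc

lemma mapsTo_comap_psiT_csa (h1 : 1 < k) (h2 : k < n) :
    Set.MapsTo (fun H => H.comap (psiT n k h1 h2))
      (csa (almostPath n k)) (csa (almostPath n k)) := by
  rintro _ ⟨I, hI, rfl⟩
  exact ⟨psiSet n k h2.le I,
    connSet_of_isConnShape (isConnShape_psiSet (by omega) h2.le (isConnShape_of_connSet hI)),
    comap_psiT_ker_linForm h1 h2 I⟩

end AlmostPath

/-- For `1 < k < n`, the map `ψ = (psiT n k _ _).dualMap` is a
linear automorphism of `(ℚ^{n+1})^*` which induces a bijection (via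
`H = ker α ↦ ker (ψ α)`, i.e. `H ↦ Submodule.comap (psiT n k _ _) H`) of the set of
hyperplanes of the connected subgraph arrangement `𝒜_{A_{n,k}}` onto itself, mapping
the hyperplane `ker (∑_{j=1}^{n+1} x_j)` to the hyperplane `ker x_k`. -/
theorem csa_almostPath_automorphism (n k : ℕ) (h1 : 1 < k) (h2 : k < n) :
    Function.Bijective (psiT n k h1 h2).dualMap ∧
      Set.BijOn (fun H => Submodule.comap (psiT n k h1 h2) H)
        (csa (almostPath n k)) (csa (almostPath n k)) ∧
      Submodule.comap (psiT n k h1 h2)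
          (LinearMap.ker (linForm (Finset.univ : Finset (Fin (n + 1))))) =
        LinearMap.ker (LinearMap.proj (⟨k - 1, by omega⟩ : Fin (n + 1)) :
          (Fin (n + 1) → ℚ) →ₗ[ℚ] ℚ) := by
  have hinv : Set.InvOn (fun H => H.comap (psiT n k h1 h2)) (fun H => H.comap (psiT n k h1 h2))
      (csa (almostPath n k)) (csa (almostPath n k)) :=
    ⟨fun H _ => AlmostPath.comap_psiT_comap_psiT h1 h2 H,
      fun H _ => AlmostPath.comap_psiT_comap_psiT h1 h2 H⟩
  have hmaps := AlmostPath.mapsTo_comap_psiT_csa h1 h2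
  refine ⟨AlmostPath.bijective_dualMap_psiT h1 h2, hinv.bijOn hmaps hmaps, ?_⟩
  rw [AlmostPath.comap_psiT_ker_linForm, AlmostPath.psiSet_univ (by omega)]
  simp [linForm, AlmostPath.branchVertex]
end
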